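/- arXiv:2410.23964 — 9 statements merged into one kernel-verified Lean document; each statement's English description precedes it below -/
import Mathlib

section
/- Let p be a prime, Q = p^d a power of p, and G = ∏_{e≥1} C_{p^e}^{m_e} a finite abelian p-group. For every integer k ≥ 0, the number of continuous group homomorphisms φ : U^1 → G from the first higher unit group U^1 of 𝔽_Q((t)) to G satisfying φ(U^{k+1}) = 1 is exactly Q^{τ(k)}, where τ(k) = Σ_{e≥1} m_e·(k − ⌊k/p^e⌋). -/
open PowerSeries

noncomputable section

/-- The `k`-th higher unit group `U^k = 1 + t^k 𝔽_Q⟦t⟧` of the Laurent series field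
`𝔽_Q((t))`, as a subgroup of the unit group of the valuation ring `𝔽_Q⟦t⟧`. -/
def HU (K : Type) [CommRing K] (k : ℕ) : Subgroup (PowerSeries K)ˣ where
  carrier := {u | (PowerSeries.X : PowerSeries K) ^ k ∣ ((u : PowerSeries K) - 1)}
  one_mem' := by simp
  mul_mem' := by
    intro a b ha hb
    have h : ((a * b : (PowerSeries K)ˣ) : PowerSeries K) - 1
        = ((a : PowerSeries K) - 1) * (b : PowerSeries K) + ((b : PowerSeries K) - 1) := by
      push_cast; ring
    rw [Set.mem_setOf_eq, h]
    exact dvd_add (ha.mul_right _) hb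
  inv_mem' := by
    intro a ha
    have h : ((a⁻¹ : (PowerSeries K)ˣ) : PowerSeries K) - 1
        = -(((a : PowerSeries K) - 1) * ((a⁻¹ : (PowerSeries K)ˣ) : PowerSeries K)) := by
      rw [sub_mul, one_mul, Units.mul_inv]; ring
    rw [Set.mem_setOf_eq, h]
    exact (dvd_neg).mpr (ha.mul_right _)

/-- The t-adic topology on the power series ring over a (discrete) coefficient ring:
the coefficientwise (product) topology with discrete coefficients. -/
def psTop (K : Type) [CommRing K] : TopologicalSpace (PowerSeries K) :=
  letI : TopologicalSpace K := ⊥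
  TopologicalSpace.induced (fun f (n : ℕ) => PowerSeries.coeff n f) inferInstance

/-- The t-adic topology on the unit group of `𝔽_Q⟦t⟧`. -/
def unitsTop (K : Type) [CommRing K] : TopologicalSpace (PowerSeries K)ˣ :=
  TopologicalSpace.induced Units.val (psTop K)

/-- The t-adic topology on the higher unit group `U^k`. -/
def huTop (K : Type) [CommRing K] (k : ℕ) : TopologicalSpace ↥(HU K k) :=
  TopologicalSpace.induced Subtype.val (unitsTop K)

/-- Continuity of a homomorphism from `U^1` (with the t-adic topology) to a discrete group. -/
def IsContHom {K : Type} [CommRing K] {G : Type} [Group G] (φ : ↥(HU K 1) →* G) : Prop :=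
  letI := huTop K 1
  letI : TopologicalSpace G := ⊥
  Continuous ⇑φ

/-- The last jump of `φ : U^1 → G`: the least `k ≥ 0` with `φ(U^{k+1}) = 1`. -/
def lastjump {K : Type} [CommRing K] {G : Type} [Group G] (φ : ↥(HU K 1) →* G) : ℕ :=
  sInf {k : ℕ | ∀ u : ↥(HU K 1), (u : (PowerSeries K)ˣ) ∈ HU K (k + 1) → φ u = 1}

/-- The finite abelian `p`-group `G = ∏_{e ≥ 1} C_{p^e}^{m_e}` (with `m_e = 0` for `e > t`),
written multiplicatively. -/
abbrev Gp (p t : ℕ) (m : ℕ → ℕ) : Type :=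
  Multiplicative ((e : Fin t) → Fin (m (e.1 + 1)) → ZMod (p ^ (e.1 + 1)))

/-- The rationals `c_0 = 0` and `c_i = Σ_{e≥1} m_e − Σ_{e=1}^{i−1} m_e p^{−e}` for `i ≥ 1`. -/
def cseq (p t : ℕ) (m : ℕ → ℕ) : ℕ → ℚ
  | 0 => 0
  | (i + 1) => (∑ e ∈ Finset.Icc 1 t, (m e : ℚ)) - ∑ e ∈ Finset.Icc 1 i, (m e : ℚ) / (p : ℚ) ^ e

/-!
A continuous homomorphism `U¹ → G` killing `U^{k+1}` is the same as a homomorphism from the finite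
abelian group `A = U¹/U^{k+1}` (continuity is automatic because `U^{k+1}` is open), and for a finite
abelian group `|Hom(A, ℤ/p^e)| = |A[p^e]|` by the structure theorem. In characteristic `p` we have
`u^{p^e} - 1 = (u - 1)^{p^e}`, so `A[p^e]` is the image of `U^{⌊k/p^e⌋+1}`. Each graded piece
`Uⁱ/U^{i+1}` (`i ≥ 1`) is isomorphic to `𝔽_Q` through the `i`-th coefficient, hence
`[U¹ : U^{j+1}] = Q^j` and `|A[p^e]| = Q^k / Q^{⌊k/p^e⌋}`.
-/

section HomCounting

theorem card_monoidHom_pi {M ι : Type*} [MulOneClass M] [Fintype ι] (B : ι → Type*)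
    [∀ i, MulOneClass (B i)] :
    Nat.card (M →* ∀ i, B i) = ∏ i, Nat.card (M →* B i) :=
  (Nat.card_congr
    { toFun := fun φ i => (Pi.evalMonoidHom B i).comp φ
      invFun := MonoidHom.pi
      left_inv := fun _ => rfl
      right_inv := fun _ => rfl }).trans Nat.card_pi

theorem card_ker_powMonoidHom_pi {ι : Type*} [Fintype ι] (B : ι → Type*)
    [∀ i, CommGroup (B i)] (n : ℕ) :
    Nat.card (powMonoidHom n : (∀ i, B i) →* _).ker
      = ∏ i, Nat.card (powMonoidHom n : B i →* B i).ker := by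
  rw [← Nat.card_pi]
  exact Nat.card_congr <|
    (Equiv.subtypeEquivRight fun x => by simp [funext_iff]).trans Equiv.subtypePiEquivPi

theorem card_ker_powMonoidHom_congr {A B : Type*} [CommGroup A] [CommGroup B] (e : A ≃* B)
    (n : ℕ) :
    Nat.card (powMonoidHom n : A →* A).ker = Nat.card (powMonoidHom n : B →* B).ker :=
  Nat.card_congr <| e.toEquiv.subtypeEquiv fun a => by simp [← map_pow]

theorem card_ker_powMonoidHom_zmod (d n : ℕ) [NeZero d] :
    Nat.card (powMonoidHom n : Multiplicative (ZMod d) →* _).ker = d.gcd n := by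
  rw [IsCyclic.card_powMonoidHom_ker, Nat.card_eq_fintype_card, Fintype.card_multiplicative,
    ZMod.card]

theorem card_monoidHom_zmod_zmod (d n : ℕ) [NeZero n] :
    Nat.card (Multiplicative (ZMod d) →* Multiplicative (ZMod n)) = n.gcd d := by
  conv_rhs => rw [← Nat.card_zmod n, ← IsAddCyclic.card_nsmulAddMonoidHom_ker]
  rw [← Nat.card_congr AddMonoidHom.toMultiplicative, ← Nat.card_congr (ZMod.lift d)]
  exact Nat.card_congr <| ((zmultiplesHom (ZMod n)).subtypeEquiv fun a => by
    simp [zmultiplesHom_apply]).symm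

theorem card_monoidHom_zmod_eq_card_ker_powMonoidHom (A : Type*) [CommGroup A] [Finite A]
    (n : ℕ) [NeZero n] :
    Nat.card (A →* Multiplicative (ZMod n)) = Nat.card (powMonoidHom n : A →* A).ker := by
  classical
  obtain ⟨ι, _, d, hd, ⟨e⟩⟩ := CommGroup.equiv_prod_multiplicative_zmod_of_finite A
  have (i : ι) : NeZero (d i) := NeZero.of_gt (hd i)
  calc Nat.card (A →* Multiplicative (ZMod n))
      = Nat.card ((∀ i, Multiplicative (ZMod (d i))) →* Multiplicative (ZMod n)) :=
        Nat.card_congr e.monoidHomCongrLeftEquiv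
    _ = ∏ i, Nat.card (Multiplicative (ZMod (d i)) →* Multiplicative (ZMod n)) :=
        (Nat.card_congr (Pi.monoidHomMulEquiv _ _).toEquiv).trans Nat.card_pi
    _ = ∏ i, Nat.card (powMonoidHom n : Multiplicative (ZMod (d i)) →* _).ker := by
        simp only [card_monoidHom_zmod_zmod, card_ker_powMonoidHom_zmod, Nat.gcd_comm]
    _ = Nat.card (powMonoidHom n : A →* A).ker := by
        rw [← card_ker_powMonoidHom_pi, card_ker_powMonoidHom_congr e]

end HomCounting

section HigherUnits

variable {K : Type} [CommRing K]

theorem HU_anti {j k : ℕ} (h : j ≤ k) : HU K k ≤ HU K j :=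
  fun _ hu => (pow_dvd_pow X h).trans hu

theorem mul_inv_mem_HU_iff {k : ℕ} {u v : (PowerSeries K)ˣ} :
    u * v⁻¹ ∈ HU K k ↔ X ^ k ∣ (u : PowerSeries K) - (v : PowerSeries K) := by
  have : ((u * v⁻¹ : (PowerSeries K)ˣ) : PowerSeries K) - 1
      = ((u : PowerSeries K) - (v : PowerSeries K)) * ↑v⁻¹ := by
    rw [Units.val_mul, sub_mul, Units.mul_inv]
  change (X : PowerSeries K) ^ k ∣ _ ↔ _
  rw [this]
  exact Units.dvd_mul_right

theorem exists_eq_one_add_X_pow_mul {i : ℕ} {u : (PowerSeries K)ˣ} (hu : u ∈ HU K i) :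
    ∃ a, (u : PowerSeries K) = 1 + X ^ i * a :=
  let ⟨a, ha⟩ := hu
  ⟨a, by rw [← ha, add_sub_cancel]⟩

theorem coeff_one_add_X_pow_mul {i : ℕ} (hi : i ≠ 0) (f : PowerSeries K) :
    coeff i (1 + X ^ i * f) = constantCoeff f := by
  rw [map_add, coeff_one, if_neg hi, coeff_X_pow_mul', if_pos le_rfl, Nat.sub_self,
    coeff_zero_eq_constantCoeff_apply, zero_add]

/-- Multiplicative because `(1 + tⁱa)(1 + tⁱb) ≡ 1 + tⁱ(a + b) mod t^{2i}` for `i ≥ 1`. -/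
def HU.coeffHom {i : ℕ} (hi : i ≠ 0) : HU K i →* Multiplicative K where
  toFun u := Multiplicative.ofAdd (coeff i ((u : (PowerSeries K)ˣ) : PowerSeries K))
  map_one' := by simp [coeff_one, hi]
  map_mul' u v := by
    obtain ⟨a, ha⟩ := exists_eq_one_add_X_pow_mul u.2
    obtain ⟨b, hb⟩ := exists_eq_one_add_X_pow_mul v.2
    have huv : (((u * v : HU K i) : (PowerSeries K)ˣ) : PowerSeries K)
        = 1 + X ^ i * (a + b + X ^ i * (a * b)) := by
      simp only [Subgroup.coe_mul, Units.val_mul, ha, hb]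
      ring
    rw [← ofAdd_add, huv, ha, hb]
    simp [coeff_one_add_X_pow_mul hi, hi]

theorem HU.coeffHom_surjective {i : ℕ} (hi : i ≠ 0) :
    Function.Surjective (HU.coeffHom (K := K) hi) := by
  intro c
  have hunit : IsUnit (1 + X ^ i * C c.toAdd : PowerSeries K) := by
    rw [isUnit_iff_constantCoeff]
    simp [hi]
  refine ⟨⟨hunit.unit, ⟨C c.toAdd, by rw [IsUnit.unit_spec, add_sub_cancel_left]⟩⟩, ?_⟩
  change Multiplicative.ofAdd (coeff i (hunit.unit : PowerSeries K)) = c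
  rw [IsUnit.unit_spec, coeff_one_add_X_pow_mul hi]
  simp

variable [IsDomain K]

theorem X_pow_succ_dvd_pow_iff {f : PowerSeries K} {n : ℕ} (hn : n ≠ 0) (k : ℕ) :
    X ^ (k + 1) ∣ f ^ n ↔ X ^ (k / n + 1) ∣ f := by
  simp only [pow_dvd_iff_le_emultiplicity, emultiplicity_pow X_prime]
  cases emultiplicity X f with
  | top => simp [hn]
  | coe m =>
    norm_cast
    rw [Nat.add_one_le_iff, Nat.add_one_le_iff, Nat.div_lt_iff_lt_mul (Nat.pos_of_ne_zero hn),
      mul_comm]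

theorem HU.coeffHom_ker {i : ℕ} (hi : i ≠ 0) :
    (HU.coeffHom (K := K) hi).ker = (HU K (i + 1)).subgroupOf (HU K i) := by
  ext u
  obtain ⟨a, ha⟩ := exists_eq_one_add_X_pow_mul u.2
  rw [MonoidHom.mem_ker, Subgroup.mem_subgroupOf]
  change Multiplicative.ofAdd (coeff i _) = 1 ↔ (X : PowerSeries K) ^ (i + 1) ∣ _ - 1
  rw [ha, ofAdd_eq_one, coeff_one_add_X_pow_mul hi, add_sub_cancel_left, pow_succ,
    mul_dvd_mul_iff_left (pow_ne_zero i X_ne_zero), X_dvd_iff]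

theorem relIndex_HU_succ {i : ℕ} (hi : i ≠ 0) :
    (HU K (i + 1)).relIndex (HU K i) = Nat.card K := by
  rw [Subgroup.relIndex, ← HU.coeffHom_ker hi, Subgroup.index_ker,
    MonoidHom.range_eq_top.mpr (HU.coeffHom_surjective hi), Subgroup.card_top,
    Nat.card_congr Multiplicative.toAdd]

theorem relIndex_HU {j n : ℕ} (hj : j ≠ 0) (hjn : j ≤ n) :
    (HU K n).relIndex (HU K j) = Nat.card K ^ (n - j) := by
  induction n, hjn using Nat.le_induction with
  | base => rw [Subgroup.relIndex_self, Nat.sub_self, pow_zero]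
  | succ n hjn ih =>
    rw [← Subgroup.relIndex_mul_relIndex _ _ _ (HU_anti n.le_succ) (HU_anti hjn),
      relIndex_HU_succ (by omega), ih, ← pow_succ', Nat.sub_add_comm hjn]

theorem pow_mem_HU_iff (p : ℕ) [ExpChar K p] (u : (PowerSeries K)ˣ) (e k : ℕ) :
    u ^ p ^ e ∈ HU K (k + 1) ↔ u ∈ HU K (k / p ^ e + 1) := by
  have : ExpChar (PowerSeries K) p := expChar_of_injective_ringHom C_injective p
  have hpow : ((u ^ p ^ e : (PowerSeries K)ˣ) : PowerSeries K) - 1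
      = ((u : PowerSeries K) - 1) ^ p ^ e := by
    rw [Units.val_pow_eq_pow_val, sub_pow_expChar_pow, one_pow]
  change (X : PowerSeries K) ^ (k + 1) ∣ _ ↔ (X : PowerSeries K) ^ (k / p ^ e + 1) ∣ _
  rw [hpow]
  exact X_pow_succ_dvd_pow_iff (pow_ne_zero _ (expChar_pos K p).ne') k

end HigherUnits

theorem isContHom_of_forall_mem_HU {K : Type} [CommRing K] {G : Type} [Group G] {k : ℕ}
    (φ : HU K 1 →* G) (hφ : ∀ u : HU K 1, (u : (PowerSeries K)ˣ) ∈ HU K (k + 1) → φ u = 1) :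
    IsContHom φ := by
  let : TopologicalSpace K := ⊥
  have : DiscreteTopology K := ⟨rfl⟩
  let := psTop K
  let := unitsTop K
  let := huTop K 1
  let : TopologicalSpace G := ⊥
  have : DiscreteTopology G := ⟨rfl⟩
  have hcoeffs : Continuous fun (w : HU K 1) (n : ℕ) =>
      coeff n ((w : (PowerSeries K)ˣ) : PowerSeries K) :=
    (continuous_induced_dom (t := Pi.topologicalSpace)).comp
      ((continuous_induced_dom (t := psTop K)).comp (continuous_induced_dom (t := unitsTop K)))
  refine continuous_discrete_rng.2 fun g => isOpen_iff_forall_mem_open.2 fun v hv => ?_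
  refine ⟨{w | X ^ (k + 1) ∣ ((w : (PowerSeries K)ˣ) : PowerSeries K) -
      ((v : (PowerSeries K)ˣ) : PowerSeries K)}, fun w hw => ?_, ?_, by simp⟩
  · rw [Set.mem_preimage, Set.mem_singleton_iff] at hv ⊢
    rw [← hv, ← mul_inv_eq_one, ← map_inv, ← map_mul]
    exact hφ _ (mul_inv_mem_HU_iff.2 hw)
  · convert (isOpen_set_pi (Set.finite_Iio (k + 1))
      fun i _ => isOpen_discrete {coeff i ((v : (PowerSeries K)ˣ) : PowerSeries K)}).preimage
      hcoeffs
    ext w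
    simp [X_pow_dvd_iff, sub_eq_zero]

abbrev HUSucc (K : Type) [CommRing K] (k : ℕ) : Subgroup (HU K 1) :=
  (HU K (k + 1)).subgroupOf (HU K 1)

section Quotient

variable {K : Type} [CommRing K] [IsDomain K]

theorem card_quotient_HUSucc (k : ℕ) : Nat.card (HU K 1 ⧸ HUSucc K k) = Nat.card K ^ k := by
  rw [← Subgroup.index_eq_card]
  exact (relIndex_HU one_ne_zero (by omega)).trans (by rw [Nat.add_sub_cancel])

instance finite_quotient_HUSucc [Finite K] (k : ℕ) : Finite (HU K 1 ⧸ HUSucc K k) :=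
  Nat.finite_of_card_ne_zero <| by
    rw [card_quotient_HUSucc]
    exact pow_ne_zero _ Nat.card_pos.ne'

theorem comap_ker_powMonoidHom_quotient_HUSucc (p : ℕ) [ExpChar K p] (e k : ℕ) :
    (powMonoidHom (α := HU K 1 ⧸ HUSucc K k) (p ^ e)).ker.comap (QuotientGroup.mk' _)
      = HUSucc K (k / p ^ e) := by
  ext u
  rw [Subgroup.mem_comap, MonoidHom.mem_ker, powMonoidHom_apply, QuotientGroup.mk'_apply,
    ← QuotientGroup.mk_pow, QuotientGroup.eq_one_iff, Subgroup.mem_subgroupOf,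
    Subgroup.mem_subgroupOf, Subgroup.coe_pow, pow_mem_HU_iff]

theorem card_ker_powMonoidHom_quotient_HUSucc [Finite K] (p : ℕ) [ExpChar K p] (e k : ℕ) :
    Nat.card (powMonoidHom (α := HU K 1 ⧸ HUSucc K k) (p ^ e)).ker
      = Nat.card K ^ (k - k / p ^ e) := by
  set T := (powMonoidHom (α := HU K 1 ⧸ HUSucc K k) (p ^ e)).ker
  have hindex : T.index = Nat.card K ^ (k / p ^ e) := by
    rw [← Subgroup.index_comap_of_surjective _ (QuotientGroup.mk'_surjective _),
      comap_ker_powMonoidHom_quotient_HUSucc, Subgroup.index_eq_card, card_quotient_HUSucc]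
  refine Nat.eq_of_mul_eq_mul_right (pow_pos Nat.card_pos _ : 0 < Nat.card K ^ (k / p ^ e)) ?_
  rw [← hindex, Subgroup.card_mul_index, card_quotient_HUSucc, hindex, ← pow_add,
    Nat.sub_add_cancel (Nat.div_le_self k _)]

end Quotient

theorem card_contHom_eq_card_monoidHom_quotient {K : Type} [CommRing K] (G : Type) [Group G]
    (k : ℕ) :
    Nat.card {φ : HU K 1 →* G // IsContHom φ ∧
        ∀ u : HU K 1, (u : (PowerSeries K)ˣ) ∈ HU K (k + 1) → φ u = 1}
      = Nat.card (HU K 1 ⧸ HUSucc K k →* G) := by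
  refine Nat.card_congr ((Equiv.subtypeEquivRight fun φ => ?_).trans
    ((QuotientGroup.mk' (HUSucc K k)).liftOfSurjective (QuotientGroup.mk'_surjective _)))
  rw [QuotientGroup.ker_mk', and_iff_right_of_imp (isContHom_of_forall_mem_HU φ)]
  exact ⟨fun h u hu => h u hu, fun h u hu => h hu⟩

theorem card_monoidHom_Gp (A : Type*) [MulOneClass A] (p t : ℕ) (m : ℕ → ℕ) :
    Nat.card (A →* Gp p t m)
      = ∏ e : Fin t, Nat.card (A →* Multiplicative (ZMod (p ^ (e.1 + 1)))) ^ m (e.1 + 1) := by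
  rw [Nat.card_congr (MulEquiv.monoidHomCongrRightEquiv ((MulEquiv.piMultiplicative _).trans
    (MulEquiv.piCongrRight fun e => MulEquiv.piMultiplicative _))), card_monoidHom_pi]
  simp only [card_monoidHom_pi, Finset.prod_const, Finset.card_univ, Fintype.card_fin]

theorem stmt1_general
    (p d Q t : ℕ) (hp : p.Prime) (hQ : Q = p ^ d)
    (m : ℕ → ℕ)
    (K : Type) [Field K] [Fintype K] (hK : Fintype.card K = Q)
    (k : ℕ) :
    Nat.card {φ : ↥(HU K 1) →* Gp p t m // IsContHom φ ∧
        ∀ u : ↥(HU K 1), (u : (PowerSeries K)ˣ) ∈ HU K (k + 1) → φ u = 1}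
      = Q ^ (∑ e ∈ Finset.Icc 1 t, m e * (k - k / p ^ e)) := by
  have : Fact p.Prime := ⟨hp⟩
  have : CharP K p := (CharP.charP_iff_prime_eq_zero hp).2 <| eq_zero_of_pow_eq_zero <| by
    rw [← Nat.cast_pow, ← hQ, ← hK]
    exact FiniteField.cast_card_eq_zero K
  rw [card_contHom_eq_card_monoidHom_quotient, card_monoidHom_Gp]
  have hcard (e : ℕ) : Nat.card (HU K 1 ⧸ HUSucc K k →* Multiplicative (ZMod (p ^ e)))
      = Q ^ (k - k / p ^ e) := by
    rw [← hK, ← Nat.card_eq_fintype_card, ← card_ker_powMonoidHom_quotient_HUSucc p e k]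
    exact card_monoidHom_zmod_eq_card_ker_powMonoidHom (HU K 1 ⧸ HUSucc K k) (p ^ e)
  simp only [hcard, ← pow_mul, Finset.prod_pow_eq_pow_sum]
  congr 1
  rw [← Finset.Ico_add_one_right_eq_Icc, Finset.sum_Ico_eq_sum_range, Nat.add_sub_cancel,
    ← Fin.sum_univ_eq_sum_range]
  simp only [Nat.add_comm 1, Nat.mul_comm]

/-- For `Q = p^d` and `G = ∏ C_{p^e}^{m_e}`, the number of continuous
homomorphisms `φ : U^1 → G` from the first higher unit group of `𝔽_Q((t))` with
`φ(U^{k+1}) = 1` is exactly `Q^{τ(k)}`, where `τ(k) = Σ_{e≥1} m_e (k − ⌊k/p^e⌋)`. -/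
theorem stmt1
    (p d Q t : ℕ) (hp : p.Prime) (hd : 1 ≤ d) (hQ : Q = p ^ d)
    (m : ℕ → ℕ) (hm : ∀ e, t < e → m e = 0)
    (K : Type) [Field K] [Fintype K] (hK : Fintype.card K = Q)
    (k : ℕ) :
    Nat.card {φ : ↥(HU K 1) →* Gp p t m // IsContHom φ ∧
        ∀ u : ↥(HU K 1), (u : (PowerSeries K)ˣ) ∈ HU K (k + 1) → φ u = 1}
      = Q ^ (∑ e ∈ Finset.Icc 1 t, m e * (k - k / p ^ e)) :=
  stmt1_general p d Q t hp hQ m K hK k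
end
end

section
/- Let p be a prime and let ν(x) := min{k ∈ ℤ_{≥0} : p^k ≥ x} for real x > 0. For all integers e ≥ 1 and k ≥ 0, Σ_{i≥1, p∤i} min(e, ν((k+1)/i)) = k − ⌊k/p^e⌋. (The sum is finite since ν((k+1)/i) = 0 for all i ≥ k+1.) -/
open scoped Classical

noncomputable section

/-- `ν(x) = min {k ∈ ℤ_{≥0} : p^k ≥ x}`. -/
def nuf (p : ℕ) (x : ℝ) : ℕ := sInf {k : ℕ | x ≤ (p : ℝ) ^ k}

/-- The index set `{i ≥ 1 : p ∤ i}`. -/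
abbrev Idx (p : ℕ) : Type := {i : ℕ // 0 < i ∧ ¬ p ∣ i}

lemma nuf_eq_zero {p : ℕ} {x : ℝ} (hx : x ≤ 1) : nuf p x = 0 := by
  have h0 : 0 ∈ {k : ℕ | x ≤ (p : ℝ) ^ k} := by simpa using hx
  simp [nuf, Nat.sInf_eq_zero.mpr (Or.inl h0)]

lemma lt_nuf_iff {p : ℕ} (hp : 2 ≤ p) {x : ℝ} {j : ℕ} :
    j < nuf p x ↔ (p : ℝ) ^ j < x := by
  unfold nuf
  have hp1 : (1:ℝ) < p := by exact_mod_cast hp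
  have hne : {k : ℕ | x ≤ (p : ℝ) ^ k}.Nonempty := by
    obtain ⟨n, hn⟩ := pow_unbounded_of_one_lt x hp1
    exact ⟨n, hn.le⟩
  constructor
  · intro h
    by_contra hcon
    push_neg at hcon
    have := Nat.sInf_le (show j ∈ {k : ℕ | x ≤ (p : ℝ) ^ k} from hcon)
    omega
  · intro h
    by_contra h'
    push_neg at h'
    have hmem : x ≤ (p:ℝ) ^ (sInf {k : ℕ | x ≤ (p : ℝ) ^ k}) := Nat.sInf_mem hne
    have : (p:ℝ) ^ (sInf {k : ℕ | x ≤ (p : ℝ) ^ k}) ≤ (p:ℝ) ^ j :=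
      pow_le_pow_right₀ hp1.le h'
    linarith

lemma min_nuf_card {p : ℕ} (hp : 2 ≤ p) (x : ℝ) (e : ℕ) :
    min e (nuf p x) = ((Finset.range e).filter fun j => (p:ℝ)^j < x).card := by
  have h : (Finset.range e).filter (fun j => (p:ℝ)^j < x)
      = Finset.range (min e (nuf p x)) := by
    ext j
    simp only [Finset.mem_filter, Finset.mem_range, lt_min_iff, ← lt_nuf_iff hp]
  rw [h, Finset.card_range]

/-- For a prime `p` and integers `e ≥ 1`, `k ≥ 0`,
`Σ_{i≥1, p∤i} min(e, ν((k+1)/i)) = k − ⌊k/p^e⌋`. (The sum has only finitely many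
nonzero terms, since `ν((k+1)/i) = 0` for `i ≥ k+1`.) -/
theorem stmt5 (p : ℕ) (hp : p.Prime) (e k : ℕ) (he : 1 ≤ e) :
    ∑' i : Idx p, min e (nuf p (((k : ℝ) + 1) / (i.1 : ℝ))) = k - k / p ^ e := by
  classical
  haveI := Fact.mk hp
  have hp2 : 2 ≤ p := hp.two_le
  set s : Finset (Idx p) := (Finset.range (k+1)).subtype (fun i => 0 < i ∧ ¬ p ∣ i) with hs
  have hsum : ∑' i : Idx p, min e (nuf p (((k : ℝ) + 1) / (i.1 : ℝ)))
      = ∑ i ∈ s, min e (nuf p (((k : ℝ) + 1) / (i.1 : ℝ))) := by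
    refine tsum_eq_sum ?_
    intro i hi
    have hik : k + 1 ≤ i.1 := by
      by_contra hc
      exact hi (by simp [hs, Finset.mem_subtype]; omega)
    have hx : ((k : ℝ) + 1) / (i.1 : ℝ) ≤ 1 := by
      rw [div_le_one (by exact_mod_cast i.2.1 : (0:ℝ) < (i.1:ℝ))]
      exact_mod_cast hik
    simp [nuf_eq_zero hx]
  rw [hsum]
  -- rewrite each term as a card over j
  have hterm : ∀ i ∈ s, min e (nuf p (((k : ℝ) + 1) / (i.1 : ℝ)))
      = ((Finset.range e).filter fun j => i.1 * p ^ j ≤ k).card := by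
    intro i _
    rw [min_nuf_card hp2]
    congr 1
    apply Finset.filter_congr
    intro j _
    have hi0 : (0:ℝ) < (i.1:ℝ) := by exact_mod_cast i.2.1
    rw [lt_div_iff₀ hi0,
      show (p:ℝ)^j * (i.1:ℝ) = ((i.1 * p ^ j : ℕ) : ℝ) by push_cast; ring,
      show (k:ℝ) + 1 = ((k + 1 : ℕ) : ℝ) by push_cast; ring, Nat.cast_lt]
    omega
  rw [Finset.sum_congr rfl hterm]
  -- turn into card of a product filter
  have hprod : ∑ i ∈ s, ((Finset.range e).filter fun j => i.1 * p ^ j ≤ k).card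
      = ((s ×ˢ Finset.range e).filter fun q => q.1.1 * p ^ q.2 ≤ k).card := by
    rw [Finset.card_filter]
    rw [Finset.sum_product]
    refine Finset.sum_congr rfl fun i _ => ?_
    rw [Finset.card_filter]
  rw [hprod]
  -- bijection with {n ∈ Ioc 0 k | ¬ p^e ∣ n}
  have hbij : ((s ×ˢ Finset.range e).filter fun q => q.1.1 * p ^ q.2 ≤ k).card
      = ((Finset.Ioc 0 k).filter fun n => ¬ p ^ e ∣ n).card := by
    have hkey : ∀ n, 0 < n → ¬ p ∣ n / p ^ padicValNat p n ∧
        (n / p ^ padicValNat p n) * p ^ padicValNat p n = n ∧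
        0 < n / p ^ padicValNat p n := by
      intro n hn0
      have hdvd : p ^ padicValNat p n ∣ n := pow_padicValNat_dvd
      have hmul : (n / p ^ padicValNat p n) * p ^ padicValNat p n = n :=
        Nat.div_mul_cancel hdvd
      have hpos : 0 < n / p ^ padicValNat p n :=
        Nat.div_pos (Nat.le_of_dvd hn0 hdvd) (pow_pos (by omega : 0 < p) _)
      refine ⟨?_, hmul, hpos⟩
      intro hpd
      obtain ⟨c, hc⟩ := hpd
      have hn' : n = p ^ (padicValNat p n + 1) * c := by
        conv_lhs => rw [← hmul, hc]
        ring
      exact pow_succ_padicValNat_not_dvd hn0.ne' ⟨c, hn'⟩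
    have hval : ∀ (q : Idx p × ℕ), padicValNat p (q.1.1 * p ^ q.2) = q.2 := by
      intro q
      have hi0 := q.1.2.1
      rw [padicValNat.mul (by omega) (pow_ne_zero _ (by omega : p ≠ 0)),
        padicValNat.eq_zero_of_not_dvd q.1.2.2, padicValNat.prime_pow]
      omega
    refine Finset.card_bij' (fun q _ => q.1.1 * p ^ q.2)
      (fun n hn => (⟨n / p ^ padicValNat p n,
        (hkey n (by simp only [Finset.mem_filter, Finset.mem_Ioc] at hn; omega)).2.2,
        (hkey n (by simp only [Finset.mem_filter, Finset.mem_Ioc] at hn; omega)).1⟩,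
        padicValNat p n)) ?_ ?_ ?_ ?_
    · -- maps into target
      intro q hq
      simp only [Finset.mem_filter, Finset.mem_product, Finset.mem_range] at hq
      obtain ⟨⟨hqs, hje⟩, hle⟩ := hq
      have hi0 := q.1.2.1
      simp only [Finset.mem_filter, Finset.mem_Ioc]
      have hq0 : 0 < q.1.1 * p ^ q.2 := Nat.mul_pos hi0 (pow_pos (by omega : 0 < p) _)
      refine ⟨⟨hq0, hle⟩, ?_⟩
      intro hdvd
      rw [padicValNat_dvd_iff] at hdvd
      rcases hdvd with h0 | hle'
      · omega
      · rw [hval q] at hle'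
        omega
    · -- maps back into source
      intro n hn
      have hn' := hn
      simp only [Finset.mem_filter, Finset.mem_Ioc] at hn'
      obtain ⟨⟨hn0, hnk⟩, hnd⟩ := hn'
      obtain ⟨hnd2, hmul, hpos⟩ := hkey n hn0
      have hje : padicValNat p n < e := by
        by_contra hc
        push_neg at hc
        exact hnd (dvd_trans (pow_dvd_pow p hc) pow_padicValNat_dvd)
      simp only [Finset.mem_filter, Finset.mem_product, Finset.mem_range, hs,
        Finset.mem_subtype]
      refine ⟨⟨?_, hje⟩, ?_⟩
      · have : n / p ^ padicValNat p n ≤ n := Nat.div_le_self _ _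
        omega
      · show n / p ^ padicValNat p n * p ^ padicValNat p n ≤ k
        omega
    · -- left inverse
      intro q hq
      obtain ⟨⟨i1, hi1⟩, j1⟩ := q
      have hv : padicValNat p (i1 * p ^ j1) = j1 := hval ⟨⟨i1, hi1⟩, j1⟩
      simp only [Prod.mk.injEq, Subtype.mk.injEq, hv]
      refine ⟨?_, trivial⟩
      exact Nat.mul_div_cancel i1 (pow_pos (by omega : 0 < p) j1)
    · -- right inverse
      intro n hn
      have hn' := hn
      simp only [Finset.mem_filter, Finset.mem_Ioc] at hn'
      exact (hkey n (by omega)).2.1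
  rw [hbij]
  -- count
  rw [Finset.filter_not, Finset.card_sdiff_of_subset (Finset.filter_subset _ _)]
  rw [Nat.Ioc_filter_dvd_card_eq_div, Nat.card_Ioc]
  simp
end
end

section
/- Let p be a prime and G = ∏_{e≥1} C_{p^e}^{m_e} a finite abelian p-group. If k ≥ 0 is an integer with base-p expansion k = Σ_{i≥0} v_i·p^i (digits 0 ≤ v_i ≤ p−1, almost all zero), then τ(k) = Σ_{i≥0} v_i·p^i·c_{i+1}, where p^i·c_{i+1} = p^i·Σ_{e≥1} m_e − Σ_{e=1}^{i} m_e·p^{i−e} is a non-negative integer. -/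
noncomputable section

/-- `τ(k) = Σ_{e ≥ 1} m_e (k − ⌊k/p^e⌋)`. -/
def tauf (p t : ℕ) (m : ℕ → ℕ) (k : ℕ) : ℕ :=
  ∑ e ∈ Finset.Icc 1 t, m e * (k - k / p ^ e)

/-!
Floor division by `p^e` acts digitwise on a base-`p` expansion, because the digits below
position `e` contribute less than `p^e`. Hence `k ↦ k - ⌊k/p^e⌋`, and with it `τ`, is additive
over the digits: `τ(Σ vᵢ pⁱ) = Σ vᵢ τ(pⁱ)`. Finally `τ(pⁱ) = Σₑ mₑ pⁱ - Σ_{e ≤ i} mₑ p^{i-e}`,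
since `⌊pⁱ/pᵉ⌋` vanishes for `e > i`, and this is `pⁱ c_{i+1}`.
-/

open Finset

section Digits

variable {p : ℕ} {v : ℕ → ℕ}

theorem sum_digit_mul_pow_lt (hv : ∀ i, v i < p) (N : ℕ) :
    ∑ i ∈ range N, v i * p ^ i < p ^ N := by
  induction N with
  | zero => simp
  | succ N ih =>
    calc ∑ i ∈ range (N + 1), v i * p ^ i
        < p ^ N + v N * p ^ N := by rw [sum_range_succ]; omega
      _ = (v N + 1) * p ^ N := by ring
      _ ≤ p ^ (N + 1) := by rw [pow_succ']; exact Nat.mul_le_mul_right _ (hv N)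

theorem sum_digit_mul_pow_div_pow (hp : 1 < p) (hv : ∀ i, v i < p) (N e : ℕ) :
    (∑ i ∈ range N, v i * p ^ i) / p ^ e = ∑ i ∈ range N, v i * (p ^ i / p ^ e) := by
  have hlow_lt : ∑ i ∈ (range N).filter (· < e), v i * p ^ i < p ^ e :=
    (sum_le_sum_of_subset fun i hi => mem_range.2 (mem_filter.1 hi).2).trans_lt
      (sum_digit_mul_pow_lt hv e)
  have hlow_div : ∑ i ∈ (range N).filter (· < e), v i * (p ^ i / p ^ e) = 0 :=
    sum_eq_zero fun i hi => by
      rw [Nat.div_eq_of_lt (Nat.pow_lt_pow_right hp (mem_filter.1 hi).2), mul_zero]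
  have hhigh : ∑ i ∈ (range N).filter (¬ · < e), v i * p ^ i
      = p ^ e * ∑ i ∈ (range N).filter (¬ · < e), v i * (p ^ i / p ^ e) := by
    rw [mul_sum]
    refine sum_congr rfl fun i hi => ?_
    rw [mul_left_comm, Nat.mul_div_cancel' (pow_dvd_pow p (not_lt.1 (mem_filter.1 hi).2))]
  rw [← sum_filter_not_add_sum_filter _ (· < e), hhigh, Nat.mul_add_div (by positivity),
    Nat.div_eq_of_lt hlow_lt, ← sum_filter_not_add_sum_filter (range N) (· < e), hlow_div]

theorem sum_digit_mul_pow_sub_div_pow (hp : 1 < p) (hv : ∀ i, v i < p) (N e : ℕ) :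
    (∑ i ∈ range N, v i * p ^ i) - (∑ i ∈ range N, v i * p ^ i) / p ^ e
      = ∑ i ∈ range N, v i * (p ^ i - p ^ i / p ^ e) := by
  rw [sum_digit_mul_pow_div_pow hp hv, ← sum_tsub_distrib _ fun i _ =>
    Nat.mul_le_mul_left _ (Nat.div_le_self _ _)]
  simp only [Nat.mul_sub]

theorem tauf_sum_digit_mul_pow (hp : 1 < p) (hv : ∀ i, v i < p) (t : ℕ) (m : ℕ → ℕ) (N : ℕ) :
    tauf p t m (∑ i ∈ range N, v i * p ^ i) = ∑ i ∈ range N, v i * tauf p t m (p ^ i) := by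
  simp only [tauf, sum_digit_mul_pow_sub_div_pow hp hv, mul_sum]
  rw [sum_comm]
  exact sum_congr rfl fun e _ => sum_congr rfl fun i _ => by ring

end Digits

theorem cast_tauf_pow {p t : ℕ} {m : ℕ → ℕ} (hp : 1 < p) (hm : ∀ e, t < e → m e = 0) (i : ℕ) :
    (tauf p t m (p ^ i) : ℚ) = p ^ i * cseq p t m (i + 1) := by
  have hfloor : ∑ e ∈ Icc 1 t, (m e : ℚ) * ((p ^ i / p ^ e : ℕ) : ℚ)
      = ∑ e ∈ Icc 1 i, (p : ℚ) ^ i * ((m e : ℚ) / (p : ℚ) ^ e) := by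
    rw [← sum_subset (Icc_subset_Icc_right (min_le_left t i)),
      ← sum_subset (Icc_subset_Icc_right (min_le_right t i))]
    · refine sum_congr rfl fun e he => ?_
      have hei : e ≤ i := (mem_Icc.1 he).2.trans (min_le_right t i)
      rw [Nat.cast_div (pow_dvd_pow p hei) (by positivity)]
      push_cast
      ring
    · intro e he hne
      rw [hm e (by simp_all), Nat.cast_zero, zero_div, mul_zero]
    · intro e he hne
      rw [Nat.div_eq_of_lt (Nat.pow_lt_pow_right hp (by simp_all)), Nat.cast_zero, mul_zero]
  simp only [tauf, cseq, Nat.cast_sum, Nat.cast_mul, Nat.cast_sub (Nat.div_le_self _ _),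
    mul_sub, sum_sub_distrib, hfloor, mul_sum]
  push_cast
  exact congrArg₂ _ (sum_congr rfl fun e _ => mul_comm _ _) rfl

theorem stmt6_general
    (p t : ℕ) (hp : p.Prime)
    (m : ℕ → ℕ) (hm : ∀ e, t < e → m e = 0)
    -- the non-negative integers `E' i = p^i·c_{i+1}`
    (E' : ℕ → ℕ) (hE' : ∀ i, (E' i : ℚ) = (p : ℚ) ^ i * cseq p t m (i + 1))
    -- the base-`p` digits of `k`
    (k T : ℕ) (v : ℕ → ℕ) (hv : ∀ i, v i < p)
    (hk : k = ∑ i ∈ Finset.range (T + 1), v i * p ^ i) :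
    tauf p t m k = ∑ i ∈ Finset.range (T + 1), v i * E' i := by
  rw [hk, tauf_sum_digit_mul_pow hp.one_lt hv]
  refine sum_congr rfl fun i _ => congrArg (v i * ·) (Nat.cast_injective (R := ℚ) ?_)
  rw [cast_tauf_pow hp.one_lt hm, hE']

/-- If `k = Σ_i v_i p^i` in base `p`, then
`τ(k) = Σ_i v_i · (p^i c_{i+1})`, the numbers `p^i c_{i+1}` being non-negative integers. -/
theorem stmt6
    (p t : ℕ) (hp : p.Prime)
    (m : ℕ → ℕ) (hm : ∀ e, t < e → m e = 0)
    -- the non-negative integers `E' i = p^i·c_{i+1}`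
    (E' : ℕ → ℕ) (hE' : ∀ i, (E' i : ℚ) = (p : ℚ) ^ i * cseq p t m (i + 1))
    -- the base-`p` digits of `k`
    (k T : ℕ) (v : ℕ → ℕ) (hv : ∀ i, v i < p) (hv0 : ∀ i, T < i → v i = 0)
    (hk : k = ∑ i ∈ Finset.range (T + 1), v i * p ^ i) :
    tauf p t m k = ∑ i ∈ Finset.range (T + 1), v i * E' i :=
  stmt6_general p t hp m hm E' hE' k T v hv hk
end
end

section
/- Let p be a prime, G = ∏_{e≥1} C_{p^e}^{m_e} a finite abelian p-group with m_e = 0 for e > t, and Q a positive integer (or more generally an element of a commutative ℚ-algebra). Then in ℚ⟦X⟧ (respectively the power series ring over that algebra): (1 − X)·Σ_{k≥0} Q^{τ(k)}·X^k = ∏_{i=0}^{t} (1 − Q^{p^i·c_i}·X^{p^i})·(1 − Q^{p^i·c_{i+1}}·X^{p^i})^{−1}, where all exponents p^i·c_i, p^i·c_{i+1} are non-negative integers and each factor with c_i = c_{i+1} equals 1. -/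
noncomputable section

/-! Reading `k` in base `p`, `τ` is additive in the digits: for `r < p^s` and a digit `j < p`
(`s < t`), `τ(r + j p^s) = τ(r) + j p^s c_{s+1}`, and above level `t` the same holds for every
`j`. So the truncation of `F = Σ Q^{τ(k)} X^k` below degree `p^s` factors as
`∏_{i<s} Σ_{j<p} z_i^j` with `z_i = Q^{p^i c_{i+1}} X^{p^i}`, and `F (1 - z_t)` is the truncation
below degree `p^t`. As `z_i^p = Q^{p^{i+1} c_{i+1}} X^{p^{i+1}}`, each geometric sum becomes
`(1 - Q^{p^{i+1} c_{i+1}} X^{p^{i+1}}) / (1 - z_i)`, which is the product formula. -/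

open Finset PowerSeries

namespace PowerSeries

variable {R : Type*}

theorem trunc_add_eq [Semiring R] (F : R⟦X⟧) (a b : ℕ) :
    trunc (a + b) F =
      trunc a F + ∑ r ∈ range b, Polynomial.monomial (a + r) (coeff (a + r) F) := by
  induction b with
  | zero => simp
  | succ b ih => rw [← add_assoc, trunc_succ, ih, sum_range_succ, add_assoc]

theorem trunc_mul_eq_trunc_mul_geom_sum [CommSemiring R] {F : R⟦X⟧} {n p : ℕ} {c : R}
    (h : ∀ j < p, ∀ r < n, coeff (j * n + r) F = c ^ j * coeff r F) :
    trunc (p * n) F = trunc n F * ∑ j ∈ range p, (Polynomial.C c * Polynomial.X ^ n) ^ j := by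
  induction p with
  | zero => simp
  | succ p ih =>
    have hpow : (Polynomial.C c * Polynomial.X ^ n) ^ p = Polynomial.monomial (p * n) (c ^ p) := by
      rw [mul_pow, ← Polynomial.C_pow, ← pow_mul, Polynomial.C_mul_X_pow_eq_monomial,
        mul_comm n]
    rw [sum_range_succ, mul_add, ← ih fun j hj => h j (by omega), add_one_mul,
      trunc_add_eq, (by simpa using trunc_add_eq F 0 n : trunc n F = _), sum_mul, hpow]
    congr 1
    refine sum_congr rfl fun r hr => ?_
    rw [Polynomial.monomial_mul_monomial, h p (by omega) r (mem_range.mp hr), add_comm r,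
      mul_comm (c ^ p)]

theorem mul_one_sub_C_mul_X_pow_eq_trunc [CommRing R] {F : R⟦X⟧} {n : ℕ} {c : R}
    (h : ∀ k, coeff (k + n) F = c * coeff k F) :
    F * (1 - C c * X ^ n) = (trunc n F : R⟦X⟧) := by
  ext k
  rw [Polynomial.coeff_coe, coeff_trunc, mul_sub, mul_one, map_sub, mul_left_comm, coeff_C_mul,
    coeff_mul_X_pow']
  split_ifs with hnk hkn hkn
  · omega
  · rw [← h, Nat.sub_add_cancel hnk, sub_self]
  · rw [mul_zero, sub_zero]
  · omega

end PowerSeries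

theorem add_mul_pow_div_pow {p s e : ℕ} (hp : 0 < p) (r j : ℕ) (hes : e ≤ s) :
    (r + j * p ^ s) / p ^ e = r / p ^ e + j * p ^ (s - e) := by
  rw [← Nat.sub_add_cancel hes, pow_add, ← mul_assoc,
    Nat.add_mul_div_right _ _ (by positivity), Nat.add_sub_cancel]

theorem tauf_add_mul_pow {p t s : ℕ} {m : ℕ → ℕ} {r j : ℕ} (hp : 0 < p) (hst : s ≤ t)
    (hr : ∀ e, s < e → e ≤ t → r + j * p ^ s < p ^ e) :
    (tauf p t m (r + j * p ^ s) : ℚ) =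
      tauf p t m r + j * ((p : ℚ) ^ s * cseq p t m (s + 1)) := by
  have hdiv : ∀ e ∈ Icc 1 t, (((r + j * p ^ s) / p ^ e : ℕ) : ℚ) =
      ((r / p ^ e : ℕ) : ℚ) + if e ≤ s then j * (p : ℚ) ^ s / (p : ℚ) ^ e else 0 := by
    intro e he
    split_ifs with hes
    · rw [mul_div_assoc, div_eq_mul_inv, ← pow_sub₀ (p : ℚ) (by positivity) hes,
        add_mul_pow_div_pow hp r j hes]
      push_cast
      ring
    · have hlt := hr e (by omega) (mem_Icc.mp he).2
      rw [Nat.div_eq_of_lt hlt, Nat.div_eq_of_lt (by omega)]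
      simp
  have hIcc : Icc 1 s = (Icc 1 t).filter (· ≤ s) := by
    ext e; simp only [mem_Icc, mem_filter]; omega
  simp only [tauf, cseq, Nat.cast_sum, Nat.cast_mul, Nat.cast_sub (Nat.div_le_self _ _)]
  rw [hIcc, sum_filter]
  simp only [mul_sub, mul_sum, ← sum_sub_distrib, ← sum_add_distrib]
  refine sum_congr rfl fun e he => ?_
  rw [hdiv e he]
  split_ifs <;> push_cast <;> ring

def tauSeries {R : Type*} [Semiring R] (p t : ℕ) (m : ℕ → ℕ) (Q : R) : R⟦X⟧ :=
  PowerSeries.mk fun k => Q ^ tauf p t m k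

section

variable {R : Type*} [CommRing R] {p t : ℕ} {m : ℕ → ℕ} {E' : ℕ → ℕ}

theorem tauf_add_mul_pow_eq (hE' : ∀ i, (E' i : ℚ) = (p : ℚ) ^ i * cseq p t m (i + 1))
    (hp : 0 < p) {s r j : ℕ} (hst : s ≤ t)
    (hr : ∀ e, s < e → e ≤ t → r + j * p ^ s < p ^ e) :
    tauf p t m (r + j * p ^ s) = tauf p t m r + j * E' s := by
  exact_mod_cast hE' s ▸ tauf_add_mul_pow hp hst hr

theorem coe_trunc_pow_tauSeries (Q : R)
    (hE' : ∀ i, (E' i : ℚ) = (p : ℚ) ^ i * cseq p t m (i + 1)) (hp : 0 < p) {s : ℕ}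
    (hs : s ≤ t) :
    (trunc (p ^ s) (tauSeries p t m Q) : R⟦X⟧) =
      ∏ i ∈ range s, ∑ j ∈ range p, (C (Q ^ E' i) * X ^ p ^ i) ^ j := by
  induction s with
  | zero => simp [tauSeries, tauf]
  | succ s ih =>
    have hcoeff : ∀ j < p, ∀ r < p ^ s, coeff (j * p ^ s + r) (tauSeries p t m Q) =
        (Q ^ E' s) ^ j * coeff r (tauSeries p t m Q) := by
      intro j hj r hr
      have hbound : r + j * p ^ s < p ^ (s + 1) := by
        calc r + j * p ^ s < (j + 1) * p ^ s := by linarith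
        _ ≤ p ^ (s + 1) := by rw [pow_succ']; exact Nat.mul_le_mul_right _ hj
      rw [tauSeries, coeff_mk, coeff_mk, add_comm,
        tauf_add_mul_pow_eq hE' hp (by omega) fun e he _ =>
          hbound.trans_le (Nat.pow_le_pow_right hp he),
        pow_add, pow_mul', mul_comm]
    rw [pow_succ', trunc_mul_eq_trunc_mul_geom_sum hcoeff, Polynomial.coe_mul, ih (by omega),
      prod_range_succ, ← Polynomial.coeToPowerSeries.ringHom_apply (φ := ∑ j ∈ range p, _)]
    simp only [map_sum, map_pow, map_mul, Polynomial.coeToPowerSeries.ringHom_apply,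
      Polynomial.coe_C, Polynomial.coe_X]

theorem tauSeries_mul_one_sub (Q : R)
    (hE' : ∀ i, (E' i : ℚ) = (p : ℚ) ^ i * cseq p t m (i + 1)) (hp : 0 < p) :
    tauSeries p t m Q * (1 - C (Q ^ E' t) * X ^ p ^ t) =
      (trunc (p ^ t) (tauSeries p t m Q) : R⟦X⟧) :=
  mul_one_sub_C_mul_X_pow_eq_trunc fun k => by
    rw [tauSeries, coeff_mk, coeff_mk, ← one_mul (p ^ t),
      tauf_add_mul_pow_eq hE' hp le_rfl fun _ _ _ => by omega, pow_add, one_mul, mul_comm]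

theorem one_sub_X_mul_tauSeries_mul_prod (Q : R) {E : ℕ → ℕ}
    (hE' : ∀ i, (E' i : ℚ) = (p : ℚ) ^ i * cseq p t m (i + 1)) (hp : 0 < p)
    (hE_zero : E 0 = 0) (hE_succ : ∀ i, E (i + 1) = p * E' i) :
    (1 - X) * tauSeries p t m Q * ∏ i ∈ range (t + 1), (1 - C (Q ^ E' i) * X ^ p ^ i) =
      ∏ i ∈ range (t + 1), (1 - C (Q ^ E i) * X ^ p ^ i) := by
  have hgeom (i : ℕ) : (1 - C (Q ^ E' i) * X ^ p ^ i) *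
      ∑ j ∈ range p, (C (Q ^ E' i) * X ^ p ^ i) ^ j =
        1 - C (Q ^ E (i + 1)) * X ^ p ^ (i + 1) := by
    rw [mul_neg_geom_sum, hE_succ, mul_pow, ← map_pow, ← pow_mul, ← pow_mul, mul_comm (E' i),
      pow_succ]
  rw [prod_range_succ, prod_range_succ', hE_zero]
  simp_rw [← hgeom]
  rw [prod_mul_distrib, ← coe_trunc_pow_tauSeries Q hE' hp le_rfl,
    ← tauSeries_mul_one_sub Q hE' hp]
  simp only [pow_zero, map_one, one_mul, pow_one]
  ring

end

theorem stmt7_general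
    (p t : ℕ) (hp : p.Prime)
    (m : ℕ → ℕ)
    (Q : ℕ)
    -- the non-negative integers `E i = p^i·c_i` and `E' i = p^i·c_{i+1}`
    (E E' : ℕ → ℕ)
    (hE : ∀ i, (E i : ℚ) = (p : ℚ) ^ i * cseq p t m i)
    (hE' : ∀ i, (E' i : ℚ) = (p : ℚ) ^ i * cseq p t m (i + 1)) :
    (1 - PowerSeries.X) * (PowerSeries.mk fun k => ((Q : ℚ) ^ tauf p t m k))
      = ∏ i ∈ Finset.range (t + 1),
          (1 - PowerSeries.C (R := ℚ) ((Q : ℚ) ^ E i) * PowerSeries.X ^ p ^ i) *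
            (1 - PowerSeries.C (R := ℚ) ((Q : ℚ) ^ E' i) * PowerSeries.X ^ p ^ i)⁻¹ := by
  have hE_zero : E 0 = 0 := by exact_mod_cast (by simpa [cseq] using hE 0)
  have hE_succ (i : ℕ) : E (i + 1) = p * E' i := by
    have h : (E (i + 1) : ℚ) = p * E' i := by rw [hE, hE', pow_succ']; ring
    exact_mod_cast h
  have hunit (i : ℕ) :
      (1 - C ((Q : ℚ) ^ E' i) * X ^ p ^ i) * (1 - C ((Q : ℚ) ^ E' i) * X ^ p ^ i)⁻¹ = 1 :=
    PowerSeries.mul_inv_cancel _ (by simp [hp.ne_zero])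
  rw [prod_mul_distrib,
    ← one_sub_X_mul_tauSeries_mul_prod (Q : ℚ) hE' hp.pos hE_zero hE_succ, mul_assoc,
    ← prod_mul_distrib]
  simp only [hunit, prod_const_one, mul_one]
  rfl

/-- For a positive integer `Q`, in `ℚ⟦X⟧`:
`(1 − X) Σ_{k≥0} Q^{τ(k)} X^k = ∏_{i=0}^{t} (1 − Q^{p^i c_i} X^{p^i})(1 − Q^{p^i c_{i+1}} X^{p^i})⁻¹`. -/
theorem stmt7
    (p t : ℕ) (hp : p.Prime)
    (m : ℕ → ℕ) (hm : ∀ e, t < e → m e = 0)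
    (Q : ℕ) (hQ : 0 < Q)
    -- the non-negative integers `E i = p^i·c_i` and `E' i = p^i·c_{i+1}`
    (E E' : ℕ → ℕ)
    (hE : ∀ i, (E i : ℚ) = (p : ℚ) ^ i * cseq p t m i)
    (hE' : ∀ i, (E' i : ℚ) = (p : ℚ) ^ i * cseq p t m (i + 1)) :
    (1 - PowerSeries.X) * (PowerSeries.mk fun k => ((Q : ℚ) ^ tauf p t m k))
      = ∏ i ∈ Finset.range (t + 1),
          (1 - PowerSeries.C (R := ℚ) ((Q : ℚ) ^ E i) * PowerSeries.X ^ p ^ i) *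
            (1 - PowerSeries.C (R := ℚ) ((Q : ℚ) ^ E' i) * PowerSeries.X ^ p ^ i)⁻¹ :=
  stmt7_general p t hp m Q E E' hE hE'
end
end

section
/- Let p be a prime, Q = p^d a power of p, and G = ∏_{e≥1} C_{p^e}^{m_e} a nontrivial finite abelian p-group, with t the largest e such that m_e ≠ 0 (so p^t is the exponent of G). Set a := c_{t+1}, so that p^t·a is a non-negative integer. Consider the complex polynomials N(z) := ∏_{i=0}^{t} (1 − Q^{p^i·c_i}·z^{p^i}) and D(z) := ∏_{i=0}^{t} (1 − Q^{p^i·c_{i+1}}·z^{p^i}). Then for every z₀ ∈ ℂ: if Q^{p^t·a}·z₀^{p^t} = 1 then the multiplicity of z₀ as a root of D exceeds its multiplicity as a root of N by exactly 1, and otherwise its multiplicity as a root of D is at most its multiplicity as a root of N. Consequently the rational function N/D is meromorphic on ℂ with simple poles exactly at the p^t points z₀ with (Q^a·z₀)^{p^t} = 1. -/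
/-!
Since `p^{i+1} c_{i+1} = p · p^i c_{i+1}`, the `(i+1)`-st factor of `N` is `1 - w^p` where
`1 - w` is the `i`-th factor of `D`, so it splits as `(1 - w)(1 + w + ⋯ + w^{p-1})`. Hence
`N = (1 - z) · ∏_{i<t} (1 - w_i) · ∏_{i<t} (1 + w_i + ⋯ + w_i^{p-1})` and
`D = ∏_{i<t} (1 - w_i) · (1 - Q^{p^t a} z^{p^t})`. The last factor has only simple roots, and at
such a root neither `1 - z` nor any geometric sum vanishes: a zero of the `i`-th sum would force
`Q^{p^t c_{i+1}} = Q^{p^t c_{t+1}}`, whereas `c_{t+1} < c_{i+1}` and `0 < c_{t+1}`.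
-/

noncomputable section

open Polynomial Finset

section Polynomial

variable {R : Type*} [CommRing R]

def powProd (p t : ℕ) (a : ℕ → R) : R[X] :=
  ∏ i ∈ range (t + 1), (1 - C (a i) * X ^ p ^ i)

lemma one_sub_C_mul_X_pow_ne_zero [Nontrivial R] (a : R) {n : ℕ} (hn : n ≠ 0) :
    (1 - C a * X ^ n : R[X]) ≠ 0 := fun h ↦ by
  simpa [zero_pow hn] using congrArg (eval 0) h

lemma powProd_ne_zero [IsDomain R] {p : ℕ} (hp : p ≠ 0) (t : ℕ) (a : ℕ → R) :
    powProd p t a ≠ 0 :=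
  prod_ne_zero_iff.mpr fun i _ ↦ one_sub_C_mul_X_pow_ne_zero _ (pow_ne_zero i hp)

lemma one_sub_C_pow_mul_X_pow_pow_succ (a : R) (p i : ℕ) :
    (1 - C (a ^ p) * X ^ p ^ (i + 1) : R[X]) =
      (1 - C a * X ^ p ^ i) * ∑ j ∈ range p, (C a * X ^ p ^ i) ^ j := by
  rw [mul_neg_geom_sum, map_pow, pow_succ, pow_mul, mul_pow]

lemma powProd_eq_of_eq_pow {p t : ℕ} {a b : ℕ → R} (hb0 : b 0 = 1)
    (hb : ∀ i, b (i + 1) = a i ^ p) :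
    powProd p t b = (∏ i ∈ range t, (1 - C (a i) * X ^ p ^ i)) *
      ((1 - X) * ∏ i ∈ range t, ∑ j ∈ range p, (C (a i) * X ^ p ^ i) ^ j) := by
  simp only [powProd, prod_range_succ', hb, one_sub_C_pow_mul_X_pow_pow_succ, prod_mul_distrib,
    hb0, map_one, pow_zero, pow_one, one_mul]
  ring

end Polynomial

section Field

variable {K : Type*} [Field K]

lemma rootMultiplicity_one_sub_C_mul_X_pow_eq_zero {a z : K} {n : ℕ} (h : a * z ^ n ≠ 1) :
    rootMultiplicity z (1 - C a * X ^ n) = 0 :=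
  rootMultiplicity_eq_zero (by simp [sub_eq_zero, Ne.symm h])

lemma rootMultiplicity_one_sub_C_mul_X_pow_eq_one [CharZero K] {a z : K} {n : ℕ} (hn : n ≠ 0)
    (h : a * z ^ n = 1) : rootMultiplicity z (1 - C a * X ^ n) = 1 := by
  have hne := one_sub_C_mul_X_pow_ne_zero a hn
  have hroot : (1 - C a * X ^ n).IsRoot z := by simp [h]
  have ha : a ≠ 0 := left_ne_zero_of_mul_eq_one h
  have hz : z ≠ 0 := fun hz ↦ by simp [hz, zero_pow hn] at h
  have hsimple : ¬ (derivative (1 - C a * X ^ n)).IsRoot z := by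
    simp [derivative_X_pow, ha, hn, hz]
  have hpos := (rootMultiplicity_pos hne).mpr hroot
  have hle : ¬ 1 < rootMultiplicity z (1 - C a * X ^ n) :=
    fun h ↦ hsimple ((one_lt_rootMultiplicity_iff_isRoot hne).mp h).2
  omega

variable {p t : ℕ} {a b : ℕ → K} {z : K}

theorem rootMultiplicity_powProd_le_of_eq_pow (hp : p ≠ 0) (hb0 : b 0 = 1)
    (hb : ∀ i, b (i + 1) = a i ^ p) (hz : a t * z ^ p ^ t ≠ 1) :
    rootMultiplicity z (powProd p t a) ≤ rootMultiplicity z (powProd p t b) := by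
  have hN := powProd_ne_zero hp t b
  have hD := powProd_ne_zero hp t a
  rw [powProd_eq_of_eq_pow hb0 hb] at hN ⊢
  rw [powProd, prod_range_succ] at hD ⊢
  rw [rootMultiplicity_mul hD, rootMultiplicity_mul hN,
    rootMultiplicity_one_sub_C_mul_X_pow_eq_zero hz]
  omega

theorem rootMultiplicity_powProd_eq_succ_of_eq_pow [CharZero K] (hp : p ≠ 0) (hb0 : b 0 = 1)
    (hb : ∀ i, b (i + 1) = a i ^ p) (ha1 : a t ≠ 1) (ha : ∀ i < t, a i ^ p ^ (t - i) ≠ a t)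
    (hz : a t * z ^ p ^ t = 1) :
    rootMultiplicity z (powProd p t a) = rootMultiplicity z (powProd p t b) + 1 := by
  have hN := powProd_ne_zero hp t b
  have hD := powProd_ne_zero hp t a
  rw [powProd_eq_of_eq_pow hb0 hb] at hN ⊢
  rw [powProd, prod_range_succ] at hD ⊢
  have hz1 : ¬ (1 - X : K[X]).IsRoot z := fun hroot ↦ by
    obtain rfl : z = 1 := (sub_eq_zero.mp (by simpa using hroot)).symm
    exact ha1 (by simpa using hz)
  have hgeom : ¬ (∏ i ∈ range t, ∑ j ∈ range p, (C (a i) * X ^ p ^ i) ^ j).IsRoot z := by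
    simp only [IsRoot, eval_prod, eval_finsetSum, eval_pow, eval_mul, eval_C, eval_X]
    refine prod_ne_zero_iff.mpr fun i hi hsum ↦ ?_
    obtain ⟨k, rfl⟩ := Nat.exists_eq_add_of_lt (mem_range.mp hi)
    have hpow : (a i * z ^ p ^ i) ^ p = 1 := by
      have := mul_neg_geom_sum (a i * z ^ p ^ i) p
      rw [hsum, mul_zero] at this
      exact (sub_eq_zero.mp this.symm).symm
    refine ha i (mem_range.mp hi) (mul_right_cancel₀ (right_ne_zero_of_mul_eq_one hz) ?_)
    calc a i ^ p ^ (i + k + 1 - i) * z ^ p ^ (i + k + 1)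
        = ((a i * z ^ p ^ i) ^ p) ^ p ^ k := by
          rw [show i + k + 1 - i = k + 1 by omega]; ring
      _ = a (i + k + 1) * z ^ p ^ (i + k + 1) := by rw [hpow, one_pow, hz]
  rw [rootMultiplicity_mul hD, rootMultiplicity_mul hN,
    rootMultiplicity_mul (right_ne_zero_of_mul hN), rootMultiplicity_eq_zero hz1,
    rootMultiplicity_eq_zero hgeom,
    rootMultiplicity_one_sub_C_mul_X_pow_eq_one (pow_ne_zero _ hp) hz]

end Field

lemma ncard_setOf_mul_pow_eq_one {c : ℂ} (hc : c ≠ 0) {n : ℕ} (hn : n ≠ 0) :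
    {z : ℂ | c * z ^ n = 1}.ncard = n := by
  classical
  have hset : {z : ℂ | c * z ^ n = 1} = ↑(nthRootsFinset n c⁻¹) := by
    ext z
    rw [mem_coe, mem_nthRootsFinset (Nat.pos_of_ne_zero hn), ← mul_eq_one_iff_eq_inv₀ hc,
      mul_comm]
    rfl
  have hζ := Complex.isPrimitiveRoot_exp n hn
  rw [hset, Set.ncard_coe_finset, nthRootsFinset,
    Multiset.toFinset_card_of_nodup (hζ.nthRoots_nodup (inv_ne_zero hc)), hζ.card_nthRoots,
    if_pos (IsAlgClosed.exists_pow_nat_eq _ (Nat.pos_of_ne_zero hn))]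

section cseq

variable {p t : ℕ} {m : ℕ → ℕ}

lemma cseq_top_succ_pos (hp : 1 < p) (ht : 1 ≤ t) (htm : m t ≠ 0) :
    0 < cseq p t m (t + 1) := by
  have hmt : (0 : ℚ) < m t := by exact_mod_cast Nat.pos_of_ne_zero htm
  have hlt : ∑ e ∈ Icc 1 t, (m e : ℚ) / (p : ℚ) ^ e < ∑ e ∈ Icc 1 t, (m e : ℚ) := by
    refine sum_lt_sum
      (fun e _ ↦ div_le_self (by positivity) (one_le_pow₀ (by exact_mod_cast hp.le)))
      ⟨t, mem_Icc.mpr ⟨ht, le_rfl⟩, div_lt_self hmt (one_lt_pow₀ (by exact_mod_cast hp) (by omega))⟩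
  simpa [cseq, sub_pos] using hlt

lemma cseq_top_succ_lt_cseq_succ (hp : 0 < p) (htm : m t ≠ 0) {i : ℕ} (hi : i < t) :
    cseq p t m (t + 1) < cseq p t m (i + 1) := by
  have hmt : (0 : ℚ) < m t := by exact_mod_cast Nat.pos_of_ne_zero htm
  have hlt : ∑ e ∈ Icc 1 i, (m e : ℚ) / (p : ℚ) ^ e < ∑ e ∈ Icc 1 t, (m e : ℚ) / (p : ℚ) ^ e :=
    sum_lt_sum_of_subset (Icc_subset_Icc_right hi.le) (mem_Icc.mpr ⟨by omega, le_rfl⟩)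
      (by simp [hi]) (by positivity) (fun _ _ _ ↦ by positivity)
  simp only [cseq]
  linarith

end cseq

theorem stmt8_general
    (p d Q t : ℕ) (hp : p.Prime) (hd : 1 ≤ d) (hQ : Q = p ^ d)
    (m : ℕ → ℕ) (ht : 1 ≤ t) (htm : m t ≠ 0)
    -- the non-negative integers `E i = p^i·c_i` and `E' i = p^i·c_{i+1}`;
    -- in particular `E' t = p^t·a` for `a = c_{t+1}`
    (E E' : ℕ → ℕ)
    (hE : ∀ i, (E i : ℚ) = (p : ℚ) ^ i * cseq p t m i)
    (hE' : ∀ i, (E' i : ℚ) = (p : ℚ) ^ i * cseq p t m (i + 1)) :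
    (∀ z₀ : ℂ,
      ((Q : ℂ) ^ E' t * z₀ ^ p ^ t = 1 →
        Polynomial.rootMultiplicity z₀
            (∏ i ∈ Finset.range (t + 1),
              (1 - Polynomial.C ((Q : ℂ) ^ E' i) * Polynomial.X ^ p ^ i))
          = Polynomial.rootMultiplicity z₀
              (∏ i ∈ Finset.range (t + 1),
                (1 - Polynomial.C ((Q : ℂ) ^ E i) * Polynomial.X ^ p ^ i)) + 1) ∧
      ((Q : ℂ) ^ E' t * z₀ ^ p ^ t ≠ 1 →
        Polynomial.rootMultiplicity z₀
            (∏ i ∈ Finset.range (t + 1),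
              (1 - Polynomial.C ((Q : ℂ) ^ E' i) * Polynomial.X ^ p ^ i))
          ≤ Polynomial.rootMultiplicity z₀
              (∏ i ∈ Finset.range (t + 1),
                (1 - Polynomial.C ((Q : ℂ) ^ E i) * Polynomial.X ^ p ^ i)))) ∧
    Set.ncard {z₀ : ℂ | (Q : ℂ) ^ E' t * z₀ ^ p ^ t = 1} = p ^ t := by
  have hp0 : p ≠ 0 := hp.ne_zero
  have hQ2 : 2 ≤ Q := hQ ▸ hp.two_le.trans (Nat.le_self_pow (by omega) p)
  have hQpow_ne {k l : ℕ} (h : k ≠ l) : (Q : ℂ) ^ k ≠ (Q : ℂ) ^ l := by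
    exact_mod_cast (Nat.pow_right_injective hQ2).ne h
  have hE0 : E 0 = 0 := by exact_mod_cast (show (E 0 : ℚ) = 0 by simp [hE, cseq])
  have hE_succ (i : ℕ) : (Q : ℂ) ^ E (i + 1) = ((Q : ℂ) ^ E' i) ^ p := by
    have : (E (i + 1) : ℚ) = E' i * p := by rw [hE, hE']; ring
    rw [show E (i + 1) = E' i * p by exact_mod_cast this, pow_mul]
  have hE't_pos : 0 < E' t := by
    exact_mod_cast (hE' t) ▸ mul_pos (by positivity) (cseq_top_succ_pos hp.one_lt ht htm)
  have hE't_lt {i : ℕ} (hi : i < t) : E' t < E' i * p ^ (t - i) := by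
    have : (E' t : ℚ) < E' i * p ^ (t - i) :=
      calc (E' t : ℚ) = p ^ t * cseq p t m (t + 1) := hE' t
        _ < p ^ t * cseq p t m (i + 1) := by
          gcongr
          exact cseq_top_succ_lt_cseq_succ hp.pos htm hi
        _ = E' i * p ^ (t - i) := by rw [hE' i, ← pow_mul_pow_sub _ hi.le]; ring
    exact_mod_cast this
  refine ⟨fun z ↦ ⟨fun hz ↦ ?_, fun hz ↦ ?_⟩,
    ncard_setOf_mul_pow_eq_one (by simp; omega) (pow_ne_zero t hp0)⟩
  · exact rootMultiplicity_powProd_eq_succ_of_eq_pow (a := fun i ↦ (Q : ℂ) ^ E' i) hp0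
      (by simp [hE0]) hE_succ (by simpa using hQpow_ne hE't_pos.ne')
      (fun i hi ↦ by simpa [← pow_mul] using hQpow_ne (hE't_lt hi).ne') hz
  · exact rootMultiplicity_powProd_le_of_eq_pow (a := fun i ↦ (Q : ℂ) ^ E' i) hp0
      (by simp [hE0]) hE_succ hz

/-- Let `p` be prime, `Q = p^d`, and `G = ∏ C_{p^e}^{m_e}` nontrivial with
exponent `p^t`. With `N(z) = ∏_{i=0}^{t} (1 − Q^{p^i c_i} z^{p^i})` and
`D(z) = ∏_{i=0}^{t} (1 − Q^{p^i c_{i+1}} z^{p^i})`, every `z₀` with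
`Q^{p^t c_{t+1}} z₀^{p^t} = 1` is a root of `D` of multiplicity exactly one more than its
multiplicity in `N`, all other `z₀` have `D`-multiplicity at most their `N`-multiplicity,
and there are exactly `p^t` such points `z₀`. -/
theorem stmt8
    (p d Q t : ℕ) (hp : p.Prime) (hd : 1 ≤ d) (hQ : Q = p ^ d)
    (m : ℕ → ℕ) (hm : ∀ e, t < e → m e = 0) (ht : 1 ≤ t) (htm : m t ≠ 0)
    -- the non-negative integers `E i = p^i·c_i` and `E' i = p^i·c_{i+1}`;
    -- in particular `E' t = p^t·a` for `a = c_{t+1}`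
    (E E' : ℕ → ℕ)
    (hE : ∀ i, (E i : ℚ) = (p : ℚ) ^ i * cseq p t m i)
    (hE' : ∀ i, (E' i : ℚ) = (p : ℚ) ^ i * cseq p t m (i + 1)) :
    (∀ z₀ : ℂ,
      ((Q : ℂ) ^ E' t * z₀ ^ p ^ t = 1 →
        Polynomial.rootMultiplicity z₀
            (∏ i ∈ Finset.range (t + 1),
              (1 - Polynomial.C ((Q : ℂ) ^ E' i) * Polynomial.X ^ p ^ i))
          = Polynomial.rootMultiplicity z₀
              (∏ i ∈ Finset.range (t + 1),
                (1 - Polynomial.C ((Q : ℂ) ^ E i) * Polynomial.X ^ p ^ i)) + 1) ∧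
      ((Q : ℂ) ^ E' t * z₀ ^ p ^ t ≠ 1 →
        Polynomial.rootMultiplicity z₀
            (∏ i ∈ Finset.range (t + 1),
              (1 - Polynomial.C ((Q : ℂ) ^ E' i) * Polynomial.X ^ p ^ i))
          ≤ Polynomial.rootMultiplicity z₀
              (∏ i ∈ Finset.range (t + 1),
                (1 - Polynomial.C ((Q : ℂ) ^ E i) * Polynomial.X ^ p ^ i)))) ∧
    Set.ncard {z₀ : ℂ | (Q : ℂ) ^ E' t * z₀ ^ p ^ t = 1} = p ^ t :=
  stmt8_general p d Q t hp hd hQ m ht htm E E' hE hE'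
end
end

section
/- Let q be a prime power. In the formal power series ring ℚ⟦X⟧ with the coefficientwise (product) topology, the family of power series ((1 − X^{deg π})^{−1}), indexed by the monic irreducible polynomials π ∈ 𝔽_q[T], is multipliable, and its product equals (1 − qX)^{−1}. Equivalently, including one additional factor (1 − X)^{−1} for the place at infinity, the product over all places of 𝔽_q(T) of (1 − X^{deg P})^{−1} equals the Hasse–Weil zeta function Z(X) = 1/((1−X)(1−qX)) of the projective line over 𝔽_q. -/
noncomputable section

/-- Monic irreducible polynomials over `Fq`: the finite places of `𝔽_q(T)`. -/
def MonicIrr (Fq : Type) [Field Fq] : Type := {π : Polynomial Fq // π.Monic ∧ Irreducible π}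

/-- The places of the rational function field `𝔽_q(T)`: the monic irreducible polynomials
together with one place at infinity (`none`). -/
def Places (Fq : Type) [Field Fq] : Type := Option (MonicIrr Fq)

/-- The degree of a place of `𝔽_q(T)`; the place at infinity has degree 1. -/
def placeDeg {Fq : Type} [Field Fq] : Places Fq → ℕ
  | none => 1
  | some π => π.1.natDegree

/-- The coefficientwise (product) topology on `ℚ⟦X⟧`. -/
instance : TopologicalSpace (PowerSeries ℚ) :=
  letI : TopologicalSpace ℚ := ⊥
  TopologicalSpace.induced (fun f (n : ℕ) => PowerSeries.coeff (R := ℚ) n f) inferInstance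

/-!
For a finite set `S` of monic irreducibles, the coefficient of `X^n` in
`∏_{π ∈ S} (1 - X^{deg π})⁻¹` counts the monic polynomials of degree `n` whose monic
irreducible factors all lie in `S`: adjoining `π` to `S` multiplies by `(1 - X^{deg π})⁻¹`,
matching the fact that such a polynomial either avoids `π` or is `π` times a polynomial of
degree `n - deg π` of the same kind. Once `S` contains every monic irreducible of degree `≤ n`,
this counts all `q^n` monic polynomials of degree `n`, the `n`-th coefficient of `(1 - qX)⁻¹`.
The place at infinity contributes the factor `(1 - X)⁻¹`.
-/

open Filter

theorem HasProd.option {M β : Type*} [CommMonoid M] [TopologicalSpace M] [ContinuousMul M]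
    {f : Option β → M} {a : M} (h : HasProd (f ∘ some) a) : HasProd f (a * f none) :=
  ((Option.some_injective β).hasProd_range_iff.2 h).mul_isCompl (Set.isCompl_range_some_none β)
    (hasProd_singleton none f)

namespace PowerSeries

theorem topology_eq_withPiTopology :
    (inferInstance : TopologicalSpace ℚ⟦X⟧) = @WithPiTopology.instTopologicalSpace ℚ ⊥ := by
  let _ : TopologicalSpace ℚ := ⊥
  apply le_antisymm
  · refine le_iInf fun d => continuous_iff_le_induced.1 ?_
    have hd : d = Finsupp.single () (d ()) := by ext; simp
    rw [hd]
    exact (continuous_apply (A := fun _ : ℕ => ℚ) (d ())).comp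
      (continuous_induced_dom (f := fun (f : ℚ⟦X⟧) (n : ℕ) => coeff n f))
  · exact continuous_iff_le_induced.1
      (@continuous_pi _ _ _ (WithPiTopology.instTopologicalSpace ℚ) _ _
        fun n => WithPiTopology.continuous_coeff ℚ n)

instance : T2Space ℚ⟦X⟧ := by
  let _ : TopologicalSpace ℚ := ⊥
  have : DiscreteTopology ℚ := ⟨rfl⟩
  have h := WithPiTopology.instT2Space ℚ
  rwa [← topology_eq_withPiTopology] at h

instance : IsTopologicalRing ℚ⟦X⟧ := by
  let _ : TopologicalSpace ℚ := ⊥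
  have : DiscreteTopology ℚ := ⟨rfl⟩
  have h := WithPiTopology.instIsTopologicalRing ℚ
  rwa [← topology_eq_withPiTopology] at h

theorem hasProd_iff_eventually_coeff_eq {ι : Type*} (f : ι → ℚ⟦X⟧) (a : ℚ⟦X⟧) :
    HasProd f a ↔ ∀ n, ∀ᶠ S : Finset ι in atTop, coeff n (∏ i ∈ S, f i) = coeff n a := by
  let _ : TopologicalSpace ℚ := ⊥
  have : DiscreteTopology ℚ := ⟨rfl⟩
  rw [HasProd, nhds_induced, tendsto_comap_iff, tendsto_pi_nhds]
  refine forall_congr' fun n => ?_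
  rw [nhds_discrete, tendsto_pure]
  rfl

theorem inv_one_sub_C_mul_X {k : Type*} [Field k] (r : k) :
    (1 - C r * X)⁻¹ = mk (r ^ ·) := by
  rw [inv_eq_iff_mul_eq_one (by simp)]
  calc mk (r ^ ·) * (1 - C r * X) = rescale r (mk 1 * (1 - X)) := by simp [rescale_mk, rescale_X]
    _ = 1 := by rw [mk_one_mul_one_sub_eq_one, map_one]

end PowerSeries

namespace Polynomial

theorem finite_setOf_natDegree_le {F : Type*} [Semiring F] [Finite F] (n : ℕ) :
    {f : F[X] | f.natDegree ≤ n}.Finite := by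
  apply Set.Finite.of_finite_image (f := fun f (i : Fin (n + 1)) => f.coeff i) (Set.toFinite _)
  intro f hf g hg h
  ext i
  rcases le_or_gt i n with hi | hi
  · exact congrFun h ⟨i, Nat.lt_succ_of_le hi⟩
  · rw [coeff_eq_zero_of_natDegree_lt (hf.trans_lt hi),
      coeff_eq_zero_of_natDegree_lt (hg.trans_lt hi)]

theorem ncard_setOf_monic_natDegree_eq {F : Type*} [Field F] [Fintype F] (n : ℕ) :
    {f : F[X] | f.Monic ∧ f.natDegree = n}.ncard = Fintype.card F ^ n := by
  rw [← Nat.card_coe_set_eq]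
  calc Nat.card {f : F[X] // f.Monic ∧ f.natDegree = n}
      = Nat.card (degreeLT F n) := Nat.card_congr (monicEquivDegreeLT n)
    _ = Nat.card (Fin n → F) := Nat.card_congr (degreeLTEquiv F n).toEquiv
    _ = Fintype.card F ^ n := by simp

end Polynomial

section SmoothMonics

open Polynomial

variable {F : Type} [Field F] {S : Finset (MonicIrr F)} {π : MonicIrr F} {n : ℕ}

def smoothMonics (S : Finset (MonicIrr F)) (n : ℕ) : Set F[X] :=
  {f | f.Monic ∧ f.natDegree = n ∧ ∀ ρ : MonicIrr F, ρ.1 ∣ f → ρ ∈ S}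

theorem smoothMonics_finite [Finite F] (S : Finset (MonicIrr F)) (n : ℕ) :
    (smoothMonics S n).Finite :=
  (finite_setOf_natDegree_le n).subset fun _ hf => hf.2.1.le

theorem smoothMonics_zero (S : Finset (MonicIrr F)) : smoothMonics S 0 = {1} := by
  ext f
  constructor
  · rintro ⟨hm, hd, -⟩
    exact hm.natDegree_eq_zero.mp hd
  · rintro rfl
    exact ⟨monic_one, natDegree_one,
      fun ρ hρ => absurd (isUnit_of_dvd_one hρ) ρ.2.2.not_isUnit⟩

theorem smoothMonics_empty (hn : n ≠ 0) : smoothMonics (∅ : Finset (MonicIrr F)) n = ∅ := by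
  refine Set.eq_empty_of_forall_notMem fun f ⟨_, hd, hdvd⟩ => ?_
  obtain ⟨g, hgm, hgi, hgf⟩ := f.exists_monic_irreducible_factor
    (not_isUnit_of_natDegree_pos f (hd ▸ Nat.pos_of_ne_zero hn))
  exact Finset.notMem_empty _ (hdvd ⟨g, hgm, hgi⟩ hgf)

theorem ncard_smoothMonics_of_forall_mem [Fintype F]
    (h : ∀ π : MonicIrr F, π.1.natDegree ≤ n → π ∈ S) :
    (smoothMonics S n).ncard = Fintype.card F ^ n := by
  convert ncard_setOf_monic_natDegree_eq (F := F) n using 2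
  ext f
  refine ⟨fun hf => ⟨hf.1, hf.2.1⟩, fun hf => ⟨hf.1, hf.2, fun π hπ => h π ?_⟩⟩
  exact hf.2 ▸ natDegree_le_of_dvd hπ hf.1.ne_zero

variable [DecidableEq (MonicIrr F)]

theorem smoothMonics_insert_of_lt (h : n < π.1.natDegree) :
    smoothMonics (insert π S) n = smoothMonics S n := by
  ext f
  refine and_congr_right fun hm => and_congr_right fun hd => forall_congr' fun ρ => ?_
  refine ⟨fun hρ hdvd => ?_, fun hρ hdvd => Finset.mem_insert_of_mem (hρ hdvd)⟩
  rcases Finset.mem_insert.mp (hρ hdvd) with rfl | hS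
  · exact absurd (hd ▸ natDegree_le_of_dvd hdvd hm.ne_zero) h.not_ge
  · exact hS

theorem smoothMonics_insert_of_le (hπS : π ∉ S) (h : π.1.natDegree ≤ n) :
    smoothMonics (insert π S) n =
      smoothMonics S n ∪ (π.1 * ·) '' smoothMonics (insert π S) (n - π.1.natDegree) := by
  have hπ0 : π.1 ≠ 0 := π.2.1.ne_zero
  ext f
  constructor
  · rintro ⟨hm, hd, hdvd⟩
    by_cases hπf : π.1 ∣ f
    · obtain ⟨g, rfl⟩ := hπf
      have hg : g.Monic := π.2.1.of_mul_monic_left hm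
      refine Or.inr ⟨g, ⟨hg, ?_, fun ρ hρ => hdvd ρ (hρ.mul_left _)⟩, rfl⟩
      rw [natDegree_mul hπ0 hg.ne_zero] at hd
      omega
    · refine Or.inl ⟨hm, hd, fun ρ hρ => ?_⟩
      rcases Finset.mem_insert.mp (hdvd ρ hρ) with rfl | hS
      · exact absurd hρ hπf
      · exact hS
  · rintro (⟨hm, hd, hdvd⟩ | ⟨g, ⟨hgm, hgd, hgdvd⟩, rfl⟩)
    · exact ⟨hm, hd, fun ρ hρ => Finset.mem_insert_of_mem (hdvd ρ hρ)⟩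
    · refine ⟨π.2.1.mul hgm, by rw [natDegree_mul hπ0 hgm.ne_zero, hgd]; omega,
        fun ρ hρ => ?_⟩
      rcases ρ.2.2.prime.dvd_or_dvd hρ with hρπ | hρg
      · exact Finset.mem_insert.mpr <| Or.inl <| Subtype.ext <|
          eq_of_monic_of_associated ρ.2.1 π.2.1 (ρ.2.2.associated_of_dvd π.2.2 hρπ)
      · exact hgdvd ρ hρg

theorem ncard_smoothMonics_insert [Finite F] (hπS : π ∉ S) (h : π.1.natDegree ≤ n) :
    (smoothMonics (insert π S) n).ncard =
      (smoothMonics S n).ncard + (smoothMonics (insert π S) (n - π.1.natDegree)).ncard := by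
  have hdisj : Disjoint (smoothMonics S n)
      ((π.1 * ·) '' smoothMonics (insert π S) (n - π.1.natDegree)) := by
    rw [Set.disjoint_left]
    rintro _ ⟨-, -, hdvd⟩ ⟨g, -, rfl⟩
    exact hπS (hdvd π (dvd_mul_right _ g))
  rw [smoothMonics_insert_of_le hπS h,
    Set.ncard_union_eq hdisj (smoothMonics_finite _ _) ((smoothMonics_finite _ _).image _),
    Set.ncard_image_of_injective _ (mul_right_injective₀ π.2.1.ne_zero)]

end SmoothMonics

section EulerProduct

open PowerSeries

variable {F : Type} [Field F]

theorem mk_ncard_smoothMonics_insert_mul [Finite F] [DecidableEq (MonicIrr F)]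
    {S : Finset (MonicIrr F)} {π : MonicIrr F} (hπS : π ∉ S) :
    mk (fun n => ((smoothMonics (insert π S) n).ncard : ℚ)) * (1 - X ^ π.1.natDegree) =
      mk fun n => ((smoothMonics S n).ncard : ℚ) := by
  ext n
  rw [mul_sub, mul_one, map_sub, coeff_mul_X_pow']
  simp only [coeff_mk]
  split_ifs with h
  · rw [ncard_smoothMonics_insert hπS h]
    push_cast
    ring
  · rw [smoothMonics_insert_of_lt (not_le.mp h), sub_zero]

theorem prod_inv_one_sub_X_pow_natDegree [Finite F] (S : Finset (MonicIrr F)) :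
    ∏ π ∈ S, (1 - X ^ π.1.natDegree : ℚ⟦X⟧)⁻¹ = mk fun n => ((smoothMonics S n).ncard : ℚ) := by
  classical
  induction S using Finset.induction_on with
  | empty =>
    ext (_ | n)
    · simp [smoothMonics_zero]
    · simp [smoothMonics_empty n.succ_ne_zero]
  | insert π S hπS ih =>
    have hdeg : π.1.natDegree ≠ 0 := π.2.2.natDegree_pos.ne'
    rw [Finset.prod_insert hπS, ih, mul_comm, eq_comm, eq_mul_inv_iff_mul_eq (by simp [hdeg]),
      mk_ncard_smoothMonics_insert_mul hπS]

theorem hasProd_inv_one_sub_X_pow_natDegree [Fintype F] :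
    HasProd (fun π : MonicIrr F => (1 - X ^ π.1.natDegree : ℚ⟦X⟧)⁻¹)
      (1 - C (Fintype.card F : ℚ) * X)⁻¹ := by
  refine (hasProd_iff_eventually_coeff_eq _ _).2 fun n => ?_
  have hfin : {π : MonicIrr F | π.1.natDegree ≤ n}.Finite :=
    (Polynomial.finite_setOf_natDegree_le n).preimage Subtype.val_injective.injOn
  filter_upwards [eventually_ge_atTop hfin.toFinset] with S hS
  rw [prod_inv_one_sub_X_pow_natDegree, inv_one_sub_C_mul_X, coeff_mk, coeff_mk,
    ncard_smoothMonics_of_forall_mem fun π hπ => hS (hfin.mem_toFinset.2 hπ)]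
  push_cast
  rfl

end EulerProduct

theorem stmt10_general
    (q : ℕ)
    (Fq : Type) [Field Fq] [Fintype Fq] (hFq : Fintype.card Fq = q) :
    (Multipliable fun π : MonicIrr Fq =>
        ((1 - PowerSeries.X ^ π.1.natDegree)⁻¹ : PowerSeries ℚ)) ∧
    (∏' π : MonicIrr Fq, ((1 - PowerSeries.X ^ π.1.natDegree)⁻¹ : PowerSeries ℚ))
        = (1 - PowerSeries.C (R := ℚ) (q : ℚ) * PowerSeries.X)⁻¹ ∧
    (Multipliable fun P : Places Fq =>
        ((1 - PowerSeries.X ^ placeDeg P)⁻¹ : PowerSeries ℚ)) ∧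
    (∏' P : Places Fq, ((1 - PowerSeries.X ^ placeDeg P)⁻¹ : PowerSeries ℚ))
        = ((1 - PowerSeries.X) * (1 - PowerSeries.C (R := ℚ) (q : ℚ) * PowerSeries.X))⁻¹ := by
  subst hFq
  have hfinite := hasProd_inv_one_sub_X_pow_natDegree (F := Fq)
  have hplaces : HasProd
      (fun P : Places Fq => ((1 - PowerSeries.X ^ placeDeg P)⁻¹ : PowerSeries ℚ)) _ :=
    hfinite.option
  rw [show placeDeg (none : Places Fq) = 1 from rfl, pow_one, ← PowerSeries.mul_inv_rev]
    at hplaces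
  exact ⟨hfinite.multipliable, hfinite.tprod_eq, hplaces.multipliable, hplaces.tprod_eq⟩

/-- In `ℚ⟦X⟧`, the family `((1 − X^{deg π})⁻¹)` indexed by the monic
irreducible polynomials `π ∈ 𝔽_q[T]` is multipliable with product `(1 − qX)⁻¹`; including
the factor `(1 − X)⁻¹` for the place at infinity, the product over all places of `𝔽_q(T)`
equals the Hasse–Weil zeta function `Z(X) = ((1−X)(1−qX))⁻¹` of `ℙ¹` over `𝔽_q`. -/
theorem stmt10
    (q : ℕ) (hq : IsPrimePow q)
    (Fq : Type) [Field Fq] [Fintype Fq] (hFq : Fintype.card Fq = q) :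
    (Multipliable fun π : MonicIrr Fq =>
        ((1 - PowerSeries.X ^ π.1.natDegree)⁻¹ : PowerSeries ℚ)) ∧
    (∏' π : MonicIrr Fq, ((1 - PowerSeries.X ^ π.1.natDegree)⁻¹ : PowerSeries ℚ))
        = (1 - PowerSeries.C (R := ℚ) (q : ℚ) * PowerSeries.X)⁻¹ ∧
    (Multipliable fun P : Places Fq =>
        ((1 - PowerSeries.X ^ placeDeg P)⁻¹ : PowerSeries ℚ)) ∧
    (∏' P : Places Fq, ((1 - PowerSeries.X ^ placeDeg P)⁻¹ : PowerSeries ℚ))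
        = ((1 - PowerSeries.X) * (1 - PowerSeries.C (R := ℚ) (q : ℚ) * PowerSeries.X))⁻¹ :=
  stmt10_general q Fq hFq

end
end

section
/- Fix an integer A ≥ 1 and set ε := 1/A. There exist real constants C > 0 and Q₀ > 0, depending only on A, such that for every real Q ≥ Q₀ and every z ∈ ℂ with |z| ≤ Q^{−(1+ε)/2}: the numbers 1 + Q·z² and 1 − Q^{a−1}·z^{2a−1} for 1 ≤ a ≤ A are all nonzero, and |(1 + z + Q·z²)·(1 + Q·z²)^{−1}·∏_{a=1}^{A}(1 − Q^{a−1}·z^{2a−1})^{−(−1)^a} − 1| ≤ C·Q^{−1−ε}. (The left-hand expression equals F_Q(z)/H_{Q,A}(z) where F_Q(z) = (1−z)(1+z+Qz²)/(1−Q²z³) and H_{Q,A}(z) = (1−z)(1+Qz²)∏_{a=1}^{A}(1−Q^{a−1}z^{2a−1})^{(−1)^a}/(1−Q²z³).) -/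
/-!
With `w = Q z²` the `a`-th factor is `1 - z w^(a-1)`, so the expression is
`(1 + z + w) (1 + w)⁻¹ P₀ / P₁ - 1`, where `P₀`, `P₁` are the products of `1 - z w^k` over the
even and the odd `k < A`. Up to `O(|z|²)` these products are `1 - z S₀` and `1 - z S₁` with
`S₀`, `S₁` the corresponding sums of `w^k`, so the numerator `(1 + z + w) P₀ - (1 + w) P₁` is
`z (1 - (1 + w)(S₀ - S₁)) + O(|z|²) = z (-w)^A + O(|z|²)`, because `S₀ - S₁` is the geometric
sum of `-w`. For `|z| ≤ Q^(-(1+ε)/2)` we have `|w| ≤ Q^(-ε)`, hence `|z|² ≤ Q^(-1-ε)` and,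
as `εA = 1`, also `|z| |w|^A ≤ Q^(-1-ε)`.
-/

open Finset

namespace Finset

section NormedCommRing

variable {ι R : Type*} [NormedCommRing R] [NormOneClass R]

lemma norm_prod_one_add_sub_one_sub_sum_le (t : Finset ι) (f : ι → R) :
    ‖∏ i ∈ t, (1 + f i) - 1 - ∑ i ∈ t, f i‖ ≤
      Real.exp (∑ i ∈ t, ‖f i‖) - 1 - ∑ i ∈ t, ‖f i‖ := by
  classical
  induction t using Finset.induction_on with
  | empty => simp
  | insert x t hx IH =>
    rw [prod_insert hx, sum_insert hx, sum_insert hx, Real.exp_add,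
      show (1 + f x) * ∏ i ∈ t, (1 + f i) - 1 - (f x + ∑ i ∈ t, f i) =
        (∏ i ∈ t, (1 + f i) - 1 - ∑ i ∈ t, f i) + f x * (∏ i ∈ t, (1 + f i) - 1) by ring]
    refine (norm_add_le_of_le IH (norm_mul_le _ _)).trans ?_
    grw [t.norm_prod_one_add_sub_one_le]
    have := mul_le_mul_of_nonneg_right (Real.add_one_le_exp ‖f x‖)
      (Real.exp_nonneg (∑ i ∈ t, ‖f i‖))
    linarith

lemma norm_prod_one_sub_sub_one_sub_sum_le_sq (t : Finset ι) (f : ι → R)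
    (hf : ∑ i ∈ t, ‖f i‖ ≤ 1) :
    ‖∏ i ∈ t, (1 - f i) - (1 - ∑ i ∈ t, f i)‖ ≤ (∑ i ∈ t, ‖f i‖) ^ 2 := by
  have h := t.norm_prod_one_add_sub_one_sub_sum_le (-f ·)
  simp only [norm_neg, ← sub_eq_add_neg, sum_neg_distrib, sub_neg_eq_add] at h
  rw [← sub_add]
  refine h.trans (le_trans (le_abs_self _) (Real.abs_exp_sub_one_sub_id_le ?_))
  rwa [abs_of_nonneg (sum_nonneg fun i _ ↦ norm_nonneg _)]

lemma norm_sum_pow_le_card (s : Finset ℕ) {w : R} (hw : ‖w‖ ≤ 1) : ‖∑ k ∈ s, w ^ k‖ ≤ #s := by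
  simpa using norm_sum_le_of_le s fun k _ ↦ (norm_pow_le w k).trans (pow_le_one₀ (norm_nonneg w) hw)

end NormedCommRing

lemma prod_zpow_neg_one_pow {G : Type*} [DivisionCommMonoid G] (s : Finset ℕ) (f : ℕ → G) :
    ∏ k ∈ s, f k ^ ((-1 : ℤ) ^ k) = (∏ k ∈ s with Even k, f k) / ∏ k ∈ s with ¬Even k, f k := by
  rw [← prod_filter_mul_prod_filter_not s Even, div_eq_mul_inv, ← prod_inv_distrib]
  congr 1 <;> refine prod_congr rfl fun k hk ↦ ?_
  · rw [(mem_filter.1 hk).2.neg_one_pow, zpow_one]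
  · rw [(Nat.not_even_iff_odd.1 (mem_filter.1 hk).2).neg_one_pow, zpow_neg_one]

lemma one_sub_one_add_mul_sum_even_sub_sum_odd {R : Type*} [CommRing R] (w : R) (n : ℕ) :
    1 - (1 + w) * (∑ k ∈ range n with Even k, w ^ k - ∑ k ∈ range n with ¬Even k, w ^ k) =
      (-w) ^ n := by
  have h : ∑ k ∈ range n, (-w) ^ k =
      ∑ k ∈ range n with Even k, w ^ k - ∑ k ∈ range n with ¬Even k, w ^ k := by
    rw [← sum_filter_add_sum_filter_not (range n) Even, sub_eq_add_neg, ← sum_neg_distrib]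
    congr 1 <;> refine sum_congr rfl fun k hk ↦ ?_
    · exact (mem_filter.1 hk).2.neg_pow w
    · exact (Nat.not_even_iff_odd.1 (mem_filter.1 hk).2).neg_pow w
  rw [← h]
  linear_combination geom_sum_mul (-w) n

lemma prod_Icc_one_eq_prod_range {M : Type*} [CommMonoid M] (f : ℕ → M) (n : ℕ) :
    ∏ a ∈ Icc 1 n, f a = ∏ k ∈ range n, f (k + 1) := by
  rw [range_eq_Ico, prod_Ico_add', zero_add, Ico_add_one_right_eq_Icc]

end Finset

section NormedField

variable {𝕜 : Type*} [NormedField 𝕜] {z w : 𝕜}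

lemma inv_two_le_norm_one_sub (hz : 2 * ‖z‖ ≤ 1) : 2⁻¹ ≤ ‖1 - z‖ := by
  have := norm_sub_norm_le (1 : 𝕜) z
  rw [norm_one] at this
  linarith

lemma one_sub_ne_zero_of_two_mul_norm_le (hz : 2 * ‖z‖ ≤ 1) : 1 - z ≠ 0 :=
  norm_pos_iff.1 <| (inv_pos.2 two_pos).trans_le (inv_two_le_norm_one_sub hz)

lemma norm_mul_pow_le (hw : ‖w‖ ≤ 1) (k : ℕ) : ‖z * w ^ k‖ ≤ ‖z‖ := by
  rw [norm_mul, norm_pow]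
  exact mul_le_of_le_one_right (norm_nonneg z) (pow_le_one₀ (norm_nonneg w) hw)

lemma two_mul_norm_mul_pow_le (hz : 2 * ‖z‖ ≤ 1) (hw : ‖w‖ ≤ 1) (k : ℕ) :
    2 * ‖z * w ^ k‖ ≤ 1 :=
  (mul_le_mul_of_nonneg_left (norm_mul_pow_le hw k) two_pos.le).trans hz

lemma norm_prod_one_sub_mul_pow_sub_le {s : Finset ℕ} {n : ℕ} (hs : #s ≤ n)
    (hz : n * ‖z‖ ≤ 1) (hw : ‖w‖ ≤ 1) :
    ‖∏ k ∈ s, (1 - z * w ^ k) - (1 - z * ∑ k ∈ s, w ^ k)‖ ≤ (n * ‖z‖) ^ 2 := by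
  have hsum : ∑ k ∈ s, ‖z * w ^ k‖ ≤ n * ‖z‖ := calc
    _ ≤ #s * ‖z‖ := by simpa using sum_le_sum fun k _ ↦ norm_mul_pow_le (z := z) hw k
    _ ≤ n * ‖z‖ := by gcongr
  rw [mul_sum]
  exact (s.norm_prod_one_sub_sub_one_sub_sum_le_sq _ (hsum.trans hz)).trans
    (pow_le_pow_left₀ (sum_nonneg fun _ _ ↦ norm_nonneg _) hsum 2)

lemma inv_two_pow_le_norm_prod_one_sub_mul_pow {s : Finset ℕ} {n : ℕ} (hs : #s ≤ n)
    (hz : 2 * ‖z‖ ≤ 1) (hw : ‖w‖ ≤ 1) : 2⁻¹ ^ n ≤ ‖∏ k ∈ s, (1 - z * w ^ k)‖ := calc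
  2⁻¹ ^ n ≤ (2⁻¹ : ℝ) ^ #s := pow_le_pow_of_le_one (by norm_num) (by norm_num) hs
  _ = ∏ k ∈ s, 2⁻¹ := (prod_const _).symm
  _ ≤ ∏ k ∈ s, ‖1 - z * w ^ k‖ := prod_le_prod (fun _ _ ↦ by norm_num) fun k _ ↦
    inv_two_le_norm_one_sub (two_mul_norm_mul_pow_le hz hw k)
  _ = ‖∏ k ∈ s, (1 - z * w ^ k)‖ := (norm_prod _ _).symm

lemma norm_one_add_add_mul_sub_one_add_mul_le {n : ℕ} {p₀ p₁ s₀ s₁ : 𝕜}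
    (hgeom : 1 - (1 + w) * (s₀ - s₁) = (-w) ^ n) (hz : ‖z‖ ≤ 1) (hw : ‖w‖ ≤ 1)
    (hs₀ : ‖s₀‖ ≤ n) (hp₀ : ‖p₀ - (1 - z * s₀)‖ ≤ (n * ‖z‖) ^ 2)
    (hp₁ : ‖p₁ - (1 - z * s₁)‖ ≤ (n * ‖z‖) ^ 2) :
    ‖(1 + z + w) * p₀ - (1 + w) * p₁‖ ≤ ‖z‖ * ‖w‖ ^ n + (5 * n ^ 2 + n) * ‖z‖ ^ 2 := by
  set e₀ := p₀ - (1 - z * s₀)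
  set e₁ := p₁ - (1 - z * s₁)
  have hw2 : ‖1 + w‖ ≤ 2 := (norm_add_le _ _).trans (by rw [norm_one]; linarith)
  have hsplit : (1 + z + w) * p₀ - (1 + w) * p₁ =
      z * (-w) ^ n + ((1 + w) * (e₀ - e₁) - z ^ 2 * s₀ + z * e₀) := by
    rw [← hgeom]; ring
  rw [hsplit]
  calc _ ≤ ‖z‖ * ‖w‖ ^ n + (‖1 + w‖ * (‖e₀‖ + ‖e₁‖) + ‖z‖ ^ 2 * ‖s₀‖ + ‖z‖ * ‖e₀‖) := by
        refine norm_add_le_of_le (by rw [norm_mul, norm_pow, norm_neg]) <|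
          norm_add_le_of_le (norm_sub_le_of_le ?_ (by rw [norm_mul, norm_pow])) (norm_mul_le _ _)
        rw [norm_mul]
        gcongr
        exact norm_sub_le _ _
    _ ≤ ‖z‖ * ‖w‖ ^ n + (2 * ((n * ‖z‖) ^ 2 + (n * ‖z‖) ^ 2) + ‖z‖ ^ 2 * n +
          1 * (n * ‖z‖) ^ 2) := by
        gcongr
    _ = _ := by ring

theorem norm_mul_inv_mul_prod_zpow_sub_one_le (n : ℕ) (hz : 2 * (n + 1) * ‖z‖ ≤ 1)
    (hw : 2 * ‖w‖ ≤ 1) :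
    ‖(1 + z + w) * (1 + w)⁻¹ * ∏ k ∈ range n, (1 - z * w ^ k) ^ ((-1 : ℤ) ^ k) - 1‖ ≤
      2 ^ (n + 1) * (‖z‖ * ‖w‖ ^ n + (5 * n ^ 2 + n) * ‖z‖ ^ 2) := by
  set p₀ := ∏ k ∈ range n with Even k, (1 - z * w ^ k)
  set p₁ := ∏ k ∈ range n with ¬Even k, (1 - z * w ^ k)
  have hz1 : 2 * ‖z‖ ≤ 1 := by nlinarith [norm_nonneg z, n.cast_nonneg (α := ℝ)]
  have hnz : n * ‖z‖ ≤ 1 := by nlinarith [norm_nonneg z]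
  have hw1 : ‖w‖ ≤ 1 := by linarith [norm_nonneg w]
  have hcard (p : ℕ → Prop) [DecidablePred p] : #({k ∈ range n | p k}) ≤ n :=
    (card_filter_le _ _).trans (card_range n).le
  have hnum := norm_one_add_add_mul_sub_one_add_mul_le (p₀ := p₀) (p₁ := p₁)
    (one_sub_one_add_mul_sum_even_sub_sum_odd w n) (by linarith) hw1
    ((norm_sum_pow_le_card _ hw1).trans (by exact_mod_cast hcard _))
    (norm_prod_one_sub_mul_pow_sub_le (hcard _) hnz hw1)
    (norm_prod_one_sub_mul_pow_sub_le (hcard _) hnz hw1)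
  have hden : 2⁻¹ ^ (n + 1) ≤ ‖(1 + w) * p₁‖ := by
    rw [norm_mul, pow_succ', ← sub_neg_eq_add]
    exact mul_le_mul (inv_two_le_norm_one_sub (by rwa [norm_neg]))
      (inv_two_pow_le_norm_prod_one_sub_mul_pow (hcard _) hz1 hw1) (by positivity) (by positivity)
  have hD : (1 + w) * p₁ ≠ 0 := norm_pos_iff.1 (lt_of_lt_of_le (by positivity) hden)
  have hp₁ : p₁ ≠ 0 := right_ne_zero_of_mul hD
  have h1w : 1 + w ≠ 0 := left_ne_zero_of_mul hD
  rw [prod_zpow_neg_one_pow, show (1 + z + w) * (1 + w)⁻¹ * (p₀ / p₁) - 1 =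
      ((1 + z + w) * p₀ - (1 + w) * p₁) / ((1 + w) * p₁) by field_simp,
    norm_div, div_le_iff₀ (norm_pos_iff.2 hD)]
  calc _ ≤ ‖z‖ * ‖w‖ ^ n + (5 * n ^ 2 + n) * ‖z‖ ^ 2 := hnum
    _ = 2 ^ (n + 1) * (‖z‖ * ‖w‖ ^ n + (5 * n ^ 2 + n) * ‖z‖ ^ 2) * 2⁻¹ ^ (n + 1) := by
      rw [mul_right_comm, ← mul_pow]; norm_num
    _ ≤ _ := by gcongr

end NormedField

lemma Real.mul_rpow_neg_inv_natCast_le_one {M Q : ℝ} {n : ℕ} (hn : n ≠ 0) (hM : 0 < M)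
    (hQ : M ^ n ≤ Q) : M * Q ^ (-(n : ℝ)⁻¹) ≤ 1 := by
  have hQ0 : 0 < Q := (pow_pos hM n).trans_le hQ
  have hMQ : M ≤ Q ^ (n : ℝ)⁻¹ := by
    simpa [Real.pow_rpow_inv_natCast hM.le hn] using
      Real.rpow_le_rpow (pow_pos hM n).le hQ (inv_nonneg.2 n.cast_nonneg)
  rw [Real.rpow_neg hQ0.le]
  exact mul_inv_le_one_of_le₀ hMQ (by positivity)

section

variable {Q ε : ℝ} {z : ℂ}

lemma sq_norm_le_rpow (hQ : 0 ≤ Q) (hz : ‖z‖ ≤ Q ^ (-(1 + ε) / 2)) :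
    ‖z‖ ^ 2 ≤ Q ^ (-1 - ε) := by
  calc ‖z‖ ^ 2 ≤ (Q ^ (-(1 + ε) / 2)) ^ 2 := pow_le_pow_left₀ (norm_nonneg z) hz 2
    _ = Q ^ (-1 - ε) := by
      rw [← Real.rpow_natCast, ← Real.rpow_mul hQ]; ring_nf

lemma norm_ofReal_mul_sq_le_rpow (hQ : 0 < Q) (hz : ‖z‖ ≤ Q ^ (-(1 + ε) / 2)) :
    ‖(Q : ℂ) * z ^ 2‖ ≤ Q ^ (-ε) := by
  rw [norm_mul, norm_pow, Complex.norm_real, Real.norm_of_nonneg hQ.le,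
    show -ε = 1 + (-1 - ε) by ring, Real.rpow_add hQ, Real.rpow_one]
  exact mul_le_mul_of_nonneg_left (sq_norm_le_rpow hQ.le hz) hQ.le

lemma norm_le_rpow_neg (hQ : 1 ≤ Q) (hε : ε ≤ 1) (hz : ‖z‖ ≤ Q ^ (-(1 + ε) / 2)) :
    ‖z‖ ≤ Q ^ (-ε) :=
  hz.trans (Real.rpow_le_rpow_of_exponent_le hQ (by linarith))

lemma norm_mul_norm_ofReal_mul_sq_pow_le {n : ℕ} (hn : n ≠ 0) (hQ : 1 ≤ Q)
    (hz : ‖z‖ ≤ Q ^ (-(1 + (n : ℝ)⁻¹) / 2)) :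
    ‖z‖ * ‖(Q : ℂ) * z ^ 2‖ ^ n ≤ Q ^ (-1 - (n : ℝ)⁻¹) := by
  have hQ0 : 0 < Q := one_pos.trans_le hQ
  have hn1 : (n : ℝ)⁻¹ ≤ 1 := inv_le_one_of_one_le₀ (by exact_mod_cast Nat.one_le_iff_ne_zero.2 hn)
  have hpow : (Q ^ (-(n : ℝ)⁻¹)) ^ n = Q ^ (-1 : ℝ) := by
    rw [← Real.rpow_natCast, ← Real.rpow_mul hQ0.le, neg_mul,
      inv_mul_cancel₀ (by exact_mod_cast hn)]
  calc ‖z‖ * ‖(Q : ℂ) * z ^ 2‖ ^ n ≤ Q ^ (-(1 + (n : ℝ)⁻¹) / 2) * Q ^ (-1 : ℝ) := by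
        rw [← hpow]
        gcongr
        exact norm_ofReal_mul_sq_le_rpow hQ0 hz
    _ = Q ^ (-(1 + (n : ℝ)⁻¹) / 2 + -1) := (Real.rpow_add hQ0 _ _).symm
    _ ≤ Q ^ (-1 - (n : ℝ)⁻¹) := Real.rpow_le_rpow_of_exponent_le hQ (by linarith)

end

/-- For fixed `A ≥ 1` and `ε = 1/A` there are constants `C, Q₀ > 0`
such that for all real `Q ≥ Q₀` and all `z ∈ ℂ` with `|z| ≤ Q^{−(1+ε)/2}`, the relevant
factors are nonzero and
`|(1+z+Qz²)(1+Qz²)⁻¹ ∏_{a=1}^{A} (1−Q^{a−1}z^{2a−1})^{−(−1)^a} − 1| ≤ C·Q^{−1−ε}`. -/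
theorem stmt11 (A : ℕ) (hA : 1 ≤ A) :
    ∃ C Q₀ : ℝ, 0 < C ∧ 0 < Q₀ ∧
      ∀ Q : ℝ, Q₀ ≤ Q → ∀ z : ℂ, ‖z‖ ≤ Q ^ (-(1 + (A : ℝ)⁻¹) / 2) →
        ((1 + (Q : ℂ) * z ^ 2 ≠ 0) ∧
          ∀ a ∈ Finset.Icc 1 A, 1 - (Q : ℂ) ^ (a - 1) * z ^ (2 * a - 1) ≠ 0) ∧
        ‖(1 + z + (Q : ℂ) * z ^ 2) * (1 + (Q : ℂ) * z ^ 2)⁻¹ *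
            (∏ a ∈ Finset.Icc 1 A,
              (1 - (Q : ℂ) ^ (a - 1) * z ^ (2 * a - 1)) ^ (-(-1 : ℤ) ^ a)) - 1‖
          ≤ C * Q ^ (-1 - (A : ℝ)⁻¹) := by
  have hA0 : A ≠ 0 := by omega
  refine ⟨2 ^ (A + 1) * (1 + (5 * A ^ 2 + A)), (2 * (A + 1)) ^ A, by positivity, by positivity,
    fun Q hQ z hz ↦ ?_⟩
  set w : ℂ := (Q : ℂ) * z ^ 2 with hw_def
  have hQ1 : 1 ≤ Q := (one_le_pow₀ (by linarith [A.cast_nonneg (α := ℝ)])).trans hQ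
  have hsmall := Real.mul_rpow_neg_inv_natCast_le_one hA0 (by positivity) hQ
  have hzε := norm_le_rpow_neg hQ1 (inv_le_one_of_one_le₀ (by exact_mod_cast hA)) hz
  have hwε := norm_ofReal_mul_sq_le_rpow (one_pos.trans_le hQ1) hz
  have hz' : 2 * (A + 1) * ‖z‖ ≤ 1 := le_trans (by gcongr) hsmall
  have hw' : 2 * ‖w‖ ≤ 1 := le_trans (by gcongr; linarith [A.cast_nonneg (α := ℝ)]) hsmall
  have hfactor (k : ℕ) : (Q : ℂ) ^ (k + 1 - 1) * z ^ (2 * (k + 1) - 1) = z * w ^ k := by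
    rw [hw_def, mul_pow, ← pow_mul, show 2 * (k + 1) - 1 = 2 * k + 1 by omega, Nat.add_sub_cancel]
    ring
  refine ⟨⟨?_, fun a ha ↦ ?_⟩, ?_⟩
  · simpa using one_sub_ne_zero_of_two_mul_norm_le (z := -w) (by rwa [norm_neg])
  · obtain ⟨k, rfl⟩ := Nat.exists_eq_add_of_le' (mem_Icc.1 ha).1
    rw [hfactor]
    exact one_sub_ne_zero_of_two_mul_norm_le <|
      two_mul_norm_mul_pow_le (by nlinarith [norm_nonneg z]) (by linarith [norm_nonneg w]) k
  · rw [prod_Icc_one_eq_prod_range]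
    simp_rw [hfactor, show ∀ k : ℕ, -(-1 : ℤ) ^ (k + 1) = (-1) ^ k by intro; ring]
    refine (norm_mul_inv_mul_prod_zpow_sub_one_le A hz' hw').trans ?_
    calc _ ≤ 2 ^ (A + 1) * (Q ^ (-1 - (A : ℝ)⁻¹) + (5 * A ^ 2 + A) * Q ^ (-1 - (A : ℝ)⁻¹)) := by
          gcongr
          · exact norm_mul_norm_ofReal_mul_sq_pow_le hA0 hQ1 hz
          · exact sq_norm_le_rpow (zero_le_one.trans hQ1) hz
      _ = _ := by ring
end

section
/- Let q > 1 be a real number. Every point w ∈ ℂ with |w| = q^{−1/2} lies in the closure of the set ⋃_{a≥1} {z ∈ ℂ : q^a·z^{2a−1} = 1}; that is, every point of the circle of radius q^{−1/2} centered at the origin is an accumulation point of the solutions of the equations q^a·z^{2a−1} = 1 for a = 1, 2, 3, …. -/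
/-!
For `n = 2a - 1` the solutions of `q^a z^n = 1` are the `n`-th roots of `q^{-a}`: they sit on the
circle of radius `ρ_a = q^{-a/n}` and are spaced `2π/n` apart in angle. So the root whose angle is
nearest to `arg w` lies within `ρ_a π / n` of `ρ_a e^{i arg w}`, and this point tends to
`q^{-1/2} e^{i arg w} = w`.
-/

open Filter Topology Complex Real

theorem norm_exp_mul_I_sub_exp_mul_I_le (φ θ : ℝ) :
    ‖exp (φ * I) - exp (θ * I)‖ ≤ |φ - θ| := by
  have hfactor : exp (φ * I) - exp (θ * I) = exp (θ * I) * (exp (I * ↑(φ - θ)) - 1) := by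
    rw [mul_sub, ← Complex.exp_add]; push_cast; ring_nf
  rw [hfactor, norm_mul, Complex.norm_exp_ofReal_mul_I, one_mul, ← Real.norm_eq_abs]
  exact Real.norm_exp_I_mul_ofReal_sub_one_le

theorem exists_int_abs_two_pi_mul_div_sub_le (θ : ℝ) {n : ℝ} (hn : 0 < n) :
    ∃ k : ℤ, |2 * π * k / n - θ| ≤ π / n := by
  refine ⟨round (θ * n / (2 * π)), ?_⟩
  have h2π : 0 < 2 * π / n := by positivity
  calc |2 * π * round (θ * n / (2 * π)) / n - θ|
      = 2 * π / n * |θ * n / (2 * π) - round (θ * n / (2 * π))| := by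
        rw [← abs_of_pos h2π, ← abs_mul, abs_sub_comm]
        congr 1
        field_simp
    _ ≤ 2 * π / n * (1 / 2) := by gcongr; exact abs_sub_round _
    _ = π / n := by ring

theorem exists_pow_eq_norm_sub_le (ρ θ : ℝ) {n : ℕ} (hn : 0 < n) :
    ∃ z : ℂ, z ^ n = (ρ : ℂ) ^ n ∧ ‖z - ρ * exp (θ * I)‖ ≤ |ρ| * (π / n) := by
  obtain ⟨k, hk⟩ := exists_int_abs_two_pi_mul_div_sub_le θ (Nat.cast_pos.2 hn : (0 : ℝ) < n)
  refine ⟨ρ * exp (↑(2 * π * k / n) * I), ?_, ?_⟩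
  · have hn' : (n : ℂ) ≠ 0 := by exact_mod_cast hn.ne'
    have hroot : exp (n * (↑(2 * π * k / n) * I)) = 1 := by
      rw [← Complex.exp_int_mul_two_pi_mul_I k]
      push_cast
      field_simp
    rw [mul_pow, ← Complex.exp_nat_mul, hroot, mul_one]
  · rw [← mul_sub, norm_mul, Complex.norm_real, Real.norm_eq_abs]
    exact mul_le_mul_of_nonneg_left ((norm_exp_mul_I_sub_exp_mul_I_le _ _).trans hk) (abs_nonneg ρ)

theorem tendsto_two_mul_natCast_add_one_atTop :
    Tendsto (fun a : ℕ => (2 * a + 1 : ℝ)) atTop atTop :=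
  tendsto_atTop_add_const_right _ _ <| tendsto_natCast_atTop_atTop.const_mul_atTop two_pos

theorem tendsto_rpow_neg_add_one_div_two_mul_add_one {q : ℝ} (hq : 0 < q) :
    Tendsto (fun a : ℕ => q ^ (-((a : ℝ) + 1) / (2 * a + 1))) atTop (𝓝 (q ^ (-(1 : ℝ) / 2))) := by
  have hinv := tendsto_inv_atTop_zero.comp tendsto_two_mul_natCast_add_one_atTop
  have hexp : Tendsto (fun a : ℕ => -((a : ℝ) + 1) / (2 * a + 1)) atTop (𝓝 (-(1 : ℝ) / 2)) := by
    have := (hinv.const_mul (-(1 / 2 : ℝ))).const_add (-(1 : ℝ) / 2)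
    rw [mul_zero, add_zero] at this
    refine this.congr fun a => ?_
    simp only [Function.comp_apply]
    field_simp
    ring
  exact (Real.continuousAt_const_rpow hq.ne').tendsto.comp hexp

theorem rpow_neg_add_one_div_two_mul_add_one_pow {q : ℝ} (hq : 0 ≤ q) (a : ℕ) :
    (q ^ (-((a : ℝ) + 1) / (2 * a + 1))) ^ (2 * a + 1) = (q ^ (a + 1))⁻¹ := by
  rw [← Real.rpow_natCast, ← Real.rpow_mul hq]
  push_cast
  rw [div_mul_cancel₀ _ (by positivity), Real.rpow_neg hq]
  norm_cast

/-- For real `q > 1`, every point `w` of the circle `|w| = q^{−1/2}`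
lies in the closure of `⋃_{a≥1} {z ∈ ℂ : q^a z^{2a−1} = 1}`. -/
theorem stmt15 (q : ℝ) (hq : 1 < q) (w : ℂ) (hw : ‖w‖ = q ^ (-(1 : ℝ) / 2)) :
    w ∈ closure (⋃ a : ℕ, ⋃ (_ : 1 ≤ a), {z : ℂ | (q : ℂ) ^ a * z ^ (2 * a - 1) = 1}) := by
  have hq0 : 0 < q := one_pos.trans hq
  -- Index the equations by `a + 1`, so that the exponent `2 * (a + 1) - 1 = 2 * a + 1` never truncates.
  set ρ : ℕ → ℝ := fun a => q ^ (-((a : ℝ) + 1) / (2 * a + 1))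
  choose z hz_pow hz_near using fun a : ℕ =>
    exists_pow_eq_norm_sub_le (ρ a) w.arg (Nat.succ_pos (2 * a))
  have hρ : Tendsto ρ atTop (𝓝 ‖w‖) := hw ▸ tendsto_rpow_neg_add_one_div_two_mul_add_one hq0
  have hmem : ∀ a, z a ∈ ⋃ a : ℕ, ⋃ (_ : 1 ≤ a), {z : ℂ | (q : ℂ) ^ a * z ^ (2 * a - 1) = 1} := by
    intro a
    refine Set.mem_iUnion₂.2 ⟨a + 1, a.succ_pos, ?_⟩
    rw [Set.mem_ofPred_eq, show 2 * (a + 1) - 1 = 2 * a + 1 by omega, hz_pow, ← ofReal_pow,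
      ← ofReal_pow, rpow_neg_add_one_div_two_mul_add_one_pow hq0.le, ← ofReal_mul,
      mul_inv_cancel₀ (pow_ne_zero _ hq0.ne'), ofReal_one]
  have hgap : Tendsto (fun a => z a - ρ a * exp (w.arg * I)) atTop (𝓝 0) := by
    refine squeeze_zero_norm hz_near ?_
    simpa using hρ.abs.mul (tendsto_const_nhds.div_atTop tendsto_two_mul_natCast_add_one_atTop)
  have hlim : Tendsto z atTop (𝓝 w) := by
    have := hgap.add ((continuous_ofReal.tendsto _).comp hρ |>.mul_const (exp (w.arg * I)))
    simpa [norm_mul_exp_arg_mul_I] using this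
  exact mem_closure_of_tendsto hlim (Eventually.of_forall hmem)
end

section
/- Let p be a prime, Q = p^d a power of p, and e ≥ 1 an integer. Let φ : U^1 → ℤ/p^eℤ be a continuous group homomorphism from the first higher unit group of 𝔽_Q((t)) to the discrete cyclic group ℤ/p^eℤ. For each integer i ≥ 0, define jump_i(φ) := the least integer k ≥ 0 such that p^i·φ(u) = 0 for all u ∈ U^{k+1} (i.e. φ(U^{k+1}) is contained in the p^i-torsion subgroup). Then for every i ≥ 0, jump_i(φ) ≥ p·jump_{i+1}(φ). -/
open PowerSeries

noncomputable section

/-- The `i`-th jump of `φ : U^1 → ℤ/p^eℤ`: the least `k ≥ 0` such that `p^i·φ(u) = 0` for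
all `u ∈ U^{k+1}`, i.e. `φ(U^{k+1})` is contained in the `p^i`-torsion subgroup. -/
def jumpAt {K : Type} [CommRing K] {p e : ℕ}
    (φ : ↥(HU K 1) →* Multiplicative (ZMod (p ^ e))) (i : ℕ) : ℕ :=
  sInf {k : ℕ | ∀ u : ↥(HU K 1),
    (u : (PowerSeries K)ˣ) ∈ HU K (k + 1) → (φ u) ^ (p ^ i) = 1}

/-
The Frobenius `u ↦ u ^ p` is additive in characteristic `p`, so `u - 1 ↦ (u - 1) ^ p` and it maps
`U^m` into `U^(m p)`. If `p^i φ` kills `U^(k+1)` and `u ∈ U^(⌊k/p⌋+1)`, then `u ^ p ∈ U^(k+1)`, so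
`p^(i+1) φ(u) = p^i φ(u ^ p) = 0`; hence `jump_(i+1)(φ) ≤ ⌊k/p⌋`. Continuity of `φ` is what makes
the jumps attained: `φ` is trivial on some `U^N`.
-/

instance PowerSeries.instCharP {R : Type*} [CommRing R] (p : ℕ) [CharP R p] : CharP R⟦X⟧ p :=
  charP_of_injective_ringHom C_injective p

section HigherUnits

variable {K : Type} [CommRing K]

theorem HU_antitone : Antitone (HU K) :=
  fun _ _ h _ hu => (pow_dvd_pow X h).trans hu

theorem pow_char_mem_HU_mul {p : ℕ} [Fact p.Prime] [CharP K p] {m : ℕ} {u : K⟦X⟧ˣ}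
    (hu : u ∈ HU K m) : u ^ p ∈ HU K (m * p) := by
  show X ^ (m * p) ∣ ((u ^ p : K⟦X⟧ˣ) : K⟦X⟧) - 1
  rw [Units.val_pow_eq_pow_val, ← one_pow p, ← sub_pow_char, pow_mul]
  exact pow_dvd_pow_of_dvd hu p

theorem exists_X_pow_dvd_sub_imp_mem {f₀ : K⟦X⟧} {s : Set K⟦X⟧}
    (hs : s ∈ @nhds _ (psTop K) f₀) : ∃ N : ℕ, ∀ g : K⟦X⟧, X ^ N ∣ g - f₀ → g ∈ s := by
  let : TopologicalSpace K := ⊥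
  have : DiscreteTopology K := ⟨rfl⟩
  rw [psTop, nhds_induced, Filter.mem_comap] at hs
  obtain ⟨t, ht, hts⟩ := hs
  rw [nhds_pi, Filter.mem_pi] at ht
  obtain ⟨I, hI, c, hc, hct⟩ := ht
  obtain ⟨N, hN⟩ := hI.bddAbove
  refine ⟨N + 1, fun g hg => hts (hct fun n hn => ?_)⟩
  have hcoeff : coeff n g = coeff n f₀ := by
    rw [← sub_eq_zero, ← map_sub]
    exact X_pow_dvd_iff.mp hg n (Nat.lt_succ_of_le (hN hn))
  show coeff n g ∈ c n
  rw [hcoeff]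
  exact mem_of_mem_nhds (hc n)

theorem IsContHom.exists_HU_le_ker {G : Type} [Group G] {φ : ↥(HU K 1) →* G}
    (hφ : IsContHom φ) : ∃ N : ℕ, ∀ u : ↥(HU K 1), (u : K⟦X⟧ˣ) ∈ HU K N → φ u = 1 := by
  have hker : φ ⁻¹' {1} ∈ @nhds _ (huTop K 1) 1 := by
    let := huTop K 1
    let : TopologicalSpace G := ⊥
    have : DiscreteTopology G := ⟨rfl⟩
    exact (hφ.continuousAt (x := 1)).preimage_mem_nhds ((isOpen_discrete _).mem_nhds (map_one φ))
  have htop : huTop K 1 = (psTop K).induced fun u : ↥(HU K 1) => ((u : K⟦X⟧ˣ) : K⟦X⟧) :=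
    induced_compose
  rw [htop, @nhds_induced _ _ (psTop K), Filter.mem_comap] at hker
  obtain ⟨t, ht, hts⟩ := hker
  obtain ⟨N, hN⟩ := exists_X_pow_dvd_sub_imp_mem ht
  exact ⟨N, fun u hu => hts (hN _ hu)⟩

end HigherUnits

section Jumps

variable {K : Type} [CommRing K] {p e : ℕ} {φ : ↥(HU K 1) →* Multiplicative (ZMod (p ^ e))}

theorem jumpAt_le_iff (hφ : IsContHom φ) {i k : ℕ} :
    jumpAt φ i ≤ k ↔ ∀ u : ↥(HU K 1), (u : K⟦X⟧ˣ) ∈ HU K (k + 1) → φ u ^ p ^ i = 1 := by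
  refine ⟨fun hle u hu => ?_, fun h => Nat.sInf_le h⟩
  obtain ⟨N, hN⟩ := hφ.exists_HU_le_ker
  have hne : ∃ k, ∀ u : ↥(HU K 1), (u : K⟦X⟧ˣ) ∈ HU K (k + 1) → φ u ^ p ^ i = 1 :=
    ⟨N, fun u hu => by rw [hN u (HU_antitone N.le_succ hu), one_pow]⟩
  exact Nat.sInf_mem hne u (HU_antitone (Nat.succ_le_succ hle) hu)

theorem mul_jumpAt_succ_le [Fact p.Prime] [CharP K p] (hφ : IsContHom φ) (i : ℕ) :
    p * jumpAt φ (i + 1) ≤ jumpAt φ i := by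
  have hp : 0 < p := (Fact.out : p.Prime).pos
  set k := jumpAt φ i
  rw [mul_comm, ← Nat.le_div_iff_mul_le hp, jumpAt_le_iff hφ]
  intro u hu
  have hup : ((u ^ p : ↥(HU K 1)) : K⟦X⟧ˣ) ∈ HU K (k + 1) :=
    HU_antitone (by nlinarith [Nat.lt_div_mul_add (a := k) hp]) (pow_char_mem_HU_mul hu)
  rw [pow_succ', pow_mul, ← map_pow]
  exact (jumpAt_le_iff hφ).mp le_rfl _ hup

end Jumps

theorem stmt17_general
    (p d Q e : ℕ) (hp : p.Prime) (hQ : Q = p ^ d)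
    (K : Type) [Field K] [Fintype K] (hK : Fintype.card K = Q)
    (φ : ↥(HU K 1) →* Multiplicative (ZMod (p ^ e))) (hφ : IsContHom φ) :
    ∀ i : ℕ, p * jumpAt φ (i + 1) ≤ jumpAt φ i := by
  have : Fact p.Prime := ⟨hp⟩
  have : CharP K p := charP_of_card_eq_prime_pow (hK.trans hQ)
  exact mul_jumpAt_succ_le hφ

/-- For `Q = p^d`, `e ≥ 1`, and a continuous homomorphism
`φ : U^1 → ℤ/p^eℤ` from the first higher unit group of `𝔽_Q((t))`, the jumps satisfy
`jump_i(φ) ≥ p·jump_{i+1}(φ)` for all `i ≥ 0`. -/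
theorem stmt17
    (p d Q e : ℕ) (hp : p.Prime) (hd : 1 ≤ d) (hQ : Q = p ^ d) (he : 1 ≤ e)
    (K : Type) [Field K] [Fintype K] (hK : Fintype.card K = Q)
    (φ : ↥(HU K 1) →* Multiplicative (ZMod (p ^ e))) (hφ : IsContHom φ) :
    ∀ i : ℕ, p * jumpAt φ (i + 1) ≤ jumpAt φ i :=
  stmt17_general p d Q e hp hQ K hK φ hφ
end
end
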